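/- arXiv:2401.14942 — 6 statements merged into one kernel-verified Lean document; each statement's English description precedes it below -/
import Mathlib

section
/- There exists a constant C > 0 such that for all points z₁, w₁, z₂, w₂ ∈ ℝ² with r := min(|z₁−z₂|, |z₁−w₂|, |w₁−z₂|, |w₁−w₂|) > 0, one has |log|z₁−z₂| + log|w₁−w₂| − log|z₁−w₂| − log|w₁−z₂|| ≤ C |z₁−w₁| |z₂−w₂| / r². -/
/-!
Writing `a = |z₁ - z₂| |w₁ - w₂|` and `b = |z₁ - w₂| |w₁ - z₂|`, the second difference is
`log a - log b`, which is at most `|a - b| / min a b` since `log x ≤ x - 1`. Ptolemy's inequality,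
applied to the quadrangles `z₁ w₁ z₂ w₂` and `z₁ w₁ w₂ z₂`, gives `|a - b| ≤ |z₁ - w₁| |z₂ - w₂|`,
and `min a b ≥ r²`. So the estimate holds with `C = 1`, in any Euclidean space.
-/

open Real

theorem Real.abs_log_sub_log_le_abs_sub_div_min {a b : ℝ} (ha : 0 < a) (hb : 0 < b) :
    |log a - log b| ≤ |a - b| / min a b := by
  wlog hba : b ≤ a generalizing a b
  · rw [abs_sub_comm, abs_sub_comm a, min_comm]
    exact this hb ha (le_of_not_ge hba)
  rw [min_eq_right hba, abs_of_nonneg (sub_nonneg.2 (log_le_log hb hba)),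
    abs_of_nonneg (sub_nonneg.2 hba), ← log_div ha.ne' hb.ne', sub_div, div_self hb.ne']
  exact log_le_sub_one_of_pos (div_pos ha hb)

namespace EuclideanGeometry

theorem abs_mul_dist_sub_mul_dist_le {V P : Type*} [NormedAddCommGroup V]
    [InnerProductSpace ℝ V] [MetricSpace P] [NormedAddTorsor V P] (z₁ w₁ z₂ w₂ : P) :
    |dist z₁ z₂ * dist w₁ w₂ - dist z₁ w₂ * dist w₁ z₂| ≤ dist z₁ w₁ * dist z₂ w₂ := by
  have h₁ := mul_dist_le_mul_dist_add_mul_dist z₁ w₁ z₂ w₂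
  have h₂ := mul_dist_le_mul_dist_add_mul_dist z₁ w₁ w₂ z₂
  rw [dist_comm w₂ z₂] at h₂
  rw [abs_le]
  constructor <;> linarith

theorem abs_log_dist_cross_le {V P : Type*} [NormedAddCommGroup V]
    [InnerProductSpace ℝ V] [MetricSpace P] [NormedAddTorsor V P] {z₁ w₁ z₂ w₂ : P} {r : ℝ}
    (hr : 0 < r) (h₁ : r ≤ dist z₁ z₂) (h₂ : r ≤ dist w₁ w₂) (h₃ : r ≤ dist z₁ w₂)
    (h₄ : r ≤ dist w₁ z₂) :
    |log (dist z₁ z₂) + log (dist w₁ w₂) - log (dist z₁ w₂) - log (dist w₁ z₂)| ≤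
      dist z₁ w₁ * dist z₂ w₂ / r ^ 2 := by
  have hr_sq_le {x y : ℝ} (hx : r ≤ x) (hy : r ≤ y) : r ^ 2 ≤ x * y := by
    rw [sq]; exact mul_le_mul hx hy hr.le (hr.le.trans hx)
  have hpos {x : ℝ} (hx : r ≤ x) : 0 < x := hr.trans_le hx
  calc |log (dist z₁ z₂) + log (dist w₁ w₂) - log (dist z₁ w₂) - log (dist w₁ z₂)|
      = |log (dist z₁ z₂ * dist w₁ w₂) - log (dist z₁ w₂ * dist w₁ z₂)| := by
        rw [log_mul (hpos h₁).ne' (hpos h₂).ne', log_mul (hpos h₃).ne' (hpos h₄).ne']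
        ring_nf
    _ ≤ |dist z₁ z₂ * dist w₁ w₂ - dist z₁ w₂ * dist w₁ z₂| /
          min (dist z₁ z₂ * dist w₁ w₂) (dist z₁ w₂ * dist w₁ z₂) :=
        abs_log_sub_log_le_abs_sub_div_min (mul_pos (hpos h₁) (hpos h₂))
          (mul_pos (hpos h₃) (hpos h₄))
    _ ≤ dist z₁ w₁ * dist z₂ w₂ / r ^ 2 :=
        div_le_div₀ (by positivity) (abs_mul_dist_sub_mul_dist_le z₁ w₁ z₂ w₂) (by positivity)
          (le_min (hr_sq_le h₁ h₂) (hr_sq_le h₃ h₄))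

end EuclideanGeometry

/-- Second-difference estimate for the logarithmic kernel in `ℝ²`. -/
theorem log_kernel_cross_estimate :
    ∃ C : ℝ, 0 < C ∧
      ∀ z₁ w₁ z₂ w₂ : EuclideanSpace ℝ (Fin 2),
        0 < min (min (dist z₁ z₂) (dist z₁ w₂)) (min (dist w₁ z₂) (dist w₁ w₂)) →
        |Real.log (dist z₁ z₂) + Real.log (dist w₁ w₂) -
            Real.log (dist z₁ w₂) - Real.log (dist w₁ z₂)| ≤
          C * dist z₁ w₁ * dist z₂ w₂ /
            (min (min (dist z₁ z₂) (dist z₁ w₂)) (min (dist w₁ z₂) (dist w₁ w₂))) ^ 2 := by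
  refine ⟨1, one_pos, fun z₁ w₁ z₂ w₂ hr => ?_⟩
  rw [one_mul]
  exact EuclideanGeometry.abs_log_dist_cross_le hr
    ((min_le_left _ _).trans (min_le_left _ _)) ((min_le_right _ _).trans (min_le_right _ _))
    ((min_le_left _ _).trans (min_le_right _ _)) ((min_le_right _ _).trans (min_le_left _ _))
end

section
/- Fix β > 0. There exists C > 0 such that the following holds. Let z, w ∈ ℝ², r > 0 with |z−w| ≥ 4r, and let x, y ∈ Q(z,r) and u, v ∈ Q(w,r), where Q(p,r) = p + [−r,r]². Then the cross-ratio quantity 𝐫 := (|x−u|^{β²} |y−v|^{β²})/(|x−v|^{β²} |y−u|^{β²}) satisfies |𝐫 − 1| ≤ C β² r² / |z−w|². -/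
/-- The axis-parallel square `Q(p,r) = p + [-r,r]²` in `ℝ²`. -/
def sqQ (p : EuclideanSpace ℝ (Fin 2)) (r : ℝ) : Set (EuclideanSpace ℝ (Fin 2)) :=
  {q | ∀ i, |q i - p i| ≤ r}

/-!
With `a = |x-u|`, `b = |y-v|`, `a' = |x-v|`, `b' = |y-u|` all comparable to `D = |z-w|`, the
identity `a² - a'² - b'² + b² = 2⟪x - y, v - u⟫` shows a second-order cancellation, which yields
`a²b² - a'²b'² = O(D²r²)`. Hence the cross-ratio `t = ab/(a'b')` satisfies
`|t - 1| ≤ |t² - 1| = O(r²/D²)`, and the mean value theorem for `s ↦ s ^ β²` on `[1/64, 64]`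
transfers this to `t ^ β²`.
-/

open Set

theorem abs_sub_one_le_abs_sq_sub_one {t : ℝ} (ht : 0 ≤ t) : |t - 1| ≤ |t ^ 2 - 1| := by
  rw [show t ^ 2 - 1 = (t - 1) * (t + 1) by ring, abs_mul,
    abs_of_nonneg (by positivity : 0 ≤ t + 1)]
  exact le_mul_of_one_le_right (abs_nonneg _) (by linarith)

theorem rpow_le_rpow_abs_of_mem_Icc {L x : ℝ} (hL : 0 < L) (hx : x ∈ Icc L⁻¹ L) (q : ℝ) :
    x ^ q ≤ L ^ |q| := by
  have hx₀ : 0 < x := (inv_pos.2 hL).trans_le hx.1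
  have hlog : |Real.log x| ≤ Real.log L := by
    refine abs_le.2 ⟨?_, Real.log_le_log hx₀ hx.2⟩
    simpa [Real.log_inv] using Real.log_le_log (inv_pos.2 hL) hx.1
  rw [Real.rpow_def_of_pos hx₀, Real.rpow_def_of_pos hL, Real.exp_le_exp]
  calc Real.log x * q ≤ |Real.log x| * |q| := by rw [← abs_mul]; exact le_abs_self _
    _ ≤ Real.log L * |q| := by gcongr

theorem abs_rpow_sub_one_le {L t : ℝ} (hL : 1 ≤ L) (ht : t ∈ Icc L⁻¹ L) (p : ℝ) :
    |t ^ p - 1| ≤ |p| * L ^ |p - 1| * |t - 1| := by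
  have hpos : ∀ x ∈ Icc L⁻¹ L, 0 < x := fun x hx => (inv_pos.2 (by linarith)).trans_le hx.1
  have hderiv : ∀ x ∈ Icc L⁻¹ L,
      HasDerivWithinAt (fun y : ℝ => y ^ p) (p * x ^ (p - 1)) (Icc L⁻¹ L) x := fun x hx =>
    (Real.hasDerivAt_rpow_const (Or.inl (hpos x hx).ne')).hasDerivWithinAt
  have hbound : ∀ x ∈ Icc L⁻¹ L, ‖p * x ^ (p - 1)‖ ≤ |p| * L ^ |p - 1| := fun x hx => by
    rw [Real.norm_eq_abs, abs_mul, abs_of_pos (Real.rpow_pos_of_pos (hpos x hx) _)]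
    gcongr
    exact rpow_le_rpow_abs_of_mem_Icc (by linarith) hx _
  have h₁ : (1 : ℝ) ∈ Icc L⁻¹ L := ⟨inv_le_one_of_one_le₀ hL, hL⟩
  simpa [Real.norm_eq_abs] using
    (convex_Icc L⁻¹ L).norm_image_sub_le_of_norm_hasDerivWithin_le hderiv hbound h₁ ht

section Metric

variable {α : Type*} [PseudoMetricSpace α]

theorem dist_mem_Icc_of_dist_le {p q z w : α} {ρ : ℝ} (hp : dist p z ≤ ρ) (hq : dist q w ≤ ρ)
    (hρ : 8 * ρ ≤ 3 * dist z w) : dist p q ∈ Icc (dist z w / 4) (2 * dist z w) := by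
  have h₁ := dist_triangle4 z p q w
  have h₂ := dist_triangle4 p z w q
  rw [dist_comm z p] at h₁
  rw [dist_comm w q] at h₂
  constructor <;> linarith

theorem abs_dist_sq_sub_dist_sq_le (x y z : α) :
    |dist x z ^ 2 - dist y z ^ 2| ≤ dist x y * (dist x z + dist y z) := by
  rw [sq_sub_sq, abs_mul, abs_of_nonneg (by positivity : 0 ≤ dist x z + dist y z), mul_comm]
  exact mul_le_mul_of_nonneg_right (abs_dist_sub_le x y z) (by positivity)

noncomputable def crossRatio (x y u v : α) : ℝ :=
  dist x u * dist y v / (dist x v * dist y u)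

theorem crossRatio_rpow (x y u v : α) (p : ℝ) :
    crossRatio x y u v ^ p = dist x u ^ p * dist y v ^ p / (dist x v ^ p * dist y u ^ p) := by
  rw [crossRatio, Real.div_rpow (by positivity) (by positivity),
    Real.mul_rpow dist_nonneg dist_nonneg, Real.mul_rpow dist_nonneg dist_nonneg]

variable {x y z u v w : α} {ρ : ℝ}

theorem crossRatio_mem_Icc (hρ : 0 < ρ) (hx : dist x z ≤ ρ) (hy : dist y z ≤ ρ)
    (hu : dist u w ≤ ρ) (hv : dist v w ≤ ρ) (hzw : 8 * ρ ≤ 3 * dist z w) :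
    crossRatio x y u v ∈ Icc 64⁻¹ 64 := by
  obtain ⟨hxu₁, hxu₂⟩ := dist_mem_Icc_of_dist_le hx hu hzw
  obtain ⟨hyv₁, hyv₂⟩ := dist_mem_Icc_of_dist_le hy hv hzw
  obtain ⟨hxv₁, hxv₂⟩ := dist_mem_Icc_of_dist_le hx hv hzw
  obtain ⟨hyu₁, hyu₂⟩ := dist_mem_Icc_of_dist_le hy hu hzw
  have hD : 0 < dist z w := by linarith
  have hden : 0 < dist x v * dist y u := by
    apply mul_pos <;> linarith
  rw [crossRatio, mem_Icc, le_div_iff₀ hden, div_le_iff₀ hden]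
  constructor <;> nlinarith [mul_le_mul hxu₁ hyv₁ (by positivity) (by linarith),
    mul_le_mul hxu₂ hyv₂ dist_nonneg (by linarith),
    mul_le_mul hxv₁ hyu₁ (by positivity) (by linarith),
    mul_le_mul hxv₂ hyu₂ dist_nonneg (by linarith)]

end Metric

section InnerProduct

variable {E : Type*} [NormedAddCommGroup E] [InnerProductSpace ℝ E]

theorem dist_sq_sub_dist_sq_sub_dist_sq_add_dist_sq (x y u v : E) :
    dist x u ^ 2 - dist x v ^ 2 - dist y u ^ 2 + dist y v ^ 2 = 2 * inner ℝ (x - y) (v - u) := by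
  simp only [dist_eq_norm, norm_sub_sq_real, inner_sub_left, inner_sub_right]
  ring

theorem abs_dist_sq_mul_dist_sq_sub_le (x y u v : E) :
    |dist x u ^ 2 * dist y v ^ 2 - dist x v ^ 2 * dist y u ^ 2| ≤
      dist u v * (dist x u + dist x v) * (dist x y * (dist y v + dist x v)) +
        dist x v ^ 2 * (2 * dist x y * dist u v) := by
  have hδ := abs_dist_sq_sub_dist_sq_le u v x
  have hε := abs_dist_sq_sub_dist_sq_le y x v
  have hη : |2 * inner ℝ (x - y) (v - u)| ≤ 2 * dist x y * dist u v := by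
    rw [abs_mul, abs_two, mul_assoc, dist_eq_norm x y, dist_comm, dist_eq_norm v u]
    gcongr
    exact abs_real_inner_le_norm _ _
  rw [dist_comm u x, dist_comm v x] at hδ
  rw [dist_comm y x] at hε
  have key : dist x u ^ 2 * dist y v ^ 2 - dist x v ^ 2 * dist y u ^ 2 =
      (dist x u ^ 2 - dist x v ^ 2) * (dist y v ^ 2 - dist x v ^ 2) +
        dist x v ^ 2 * (2 * inner ℝ (x - y) (v - u)) := by
    rw [← dist_sq_sub_dist_sq_sub_dist_sq_add_dist_sq]; ring
  rw [key]
  refine (abs_add_le _ _).trans (add_le_add ?_ ?_) <;> rw [abs_mul]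
  · exact mul_le_mul hδ hε (abs_nonneg _) (by positivity)
  · rw [abs_of_nonneg (by positivity)]
    exact mul_le_mul_of_nonneg_left hη (by positivity)

variable {x y z u v w : E} {ρ : ℝ}

theorem abs_crossRatio_sub_one_le (hρ : 0 < ρ) (hx : dist x z ≤ ρ) (hy : dist y z ≤ ρ)
    (hu : dist u w ≤ ρ) (hv : dist v w ≤ ρ) (hzw : 8 * ρ ≤ 3 * dist z w) :
    |crossRatio x y u v - 1| ≤ 24576 * ρ ^ 2 / dist z w ^ 2 := by
  obtain ⟨hxu₁, hxu₂⟩ := dist_mem_Icc_of_dist_le hx hu hzw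
  obtain ⟨hyv₁, hyv₂⟩ := dist_mem_Icc_of_dist_le hy hv hzw
  obtain ⟨hxv₁, hxv₂⟩ := dist_mem_Icc_of_dist_le hx hv hzw
  obtain ⟨hyu₁, hyu₂⟩ := dist_mem_Icc_of_dist_le hy hu hzw
  have hxy : dist x y ≤ 2 * ρ := (dist_triangle_right x y z).trans (by linarith)
  have huv : dist u v ≤ 2 * ρ := (dist_triangle_right u v w).trans (by linarith)
  set D := dist z w
  have hD : 0 < D := by linarith
  have hnum : |dist x u ^ 2 * dist y v ^ 2 - dist x v ^ 2 * dist y u ^ 2| ≤ 96 * D ^ 2 * ρ ^ 2 :=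
    calc _ ≤ _ := abs_dist_sq_mul_dist_sq_sub_le x y u v
      _ ≤ 2 * ρ * (2 * D + 2 * D) * (2 * ρ * (2 * D + 2 * D)) +
          (2 * D) ^ 2 * (2 * (2 * ρ) * (2 * ρ)) := by gcongr
      _ = 96 * D ^ 2 * ρ ^ 2 := by ring
  have hden : D ^ 4 / 256 ≤ (dist x v * dist y u) ^ 2 := by
    rw [show D ^ 4 / 256 = (D / 4 * (D / 4)) ^ 2 by ring]
    gcongr
  have hsq : crossRatio x y u v ^ 2 - 1 =
      (dist x u ^ 2 * dist y v ^ 2 - dist x v ^ 2 * dist y u ^ 2) / (dist x v * dist y u) ^ 2 := by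
    have : dist x v * dist y u ≠ 0 := by apply mul_ne_zero <;> linarith
    rw [crossRatio, div_pow, div_sub_one (pow_ne_zero 2 this), mul_pow, mul_pow]
  calc |crossRatio x y u v - 1| ≤ |crossRatio x y u v ^ 2 - 1| :=
        abs_sub_one_le_abs_sq_sub_one (by rw [crossRatio]; positivity)
    _ ≤ 96 * D ^ 2 * ρ ^ 2 / (D ^ 4 / 256) := by
        rw [hsq, abs_div, abs_sq]
        gcongr
    _ = 24576 * ρ ^ 2 / D ^ 2 := by field_simp; ring

end InnerProduct

-- The half-diagonal `√2 r` of the square, rounded up to avoid square roots.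
theorem dist_le_of_mem_sqQ {p q : EuclideanSpace ℝ (Fin 2)} {r : ℝ} (h : q ∈ sqQ p r) :
    dist q p ≤ 3 / 2 * r := by
  have h₀ := h 0
  have h₁ := h 1
  rw [EuclideanSpace.dist_eq, Real.sqrt_le_left (by linarith [abs_nonneg (q 0 - p 0)]),
    Fin.sum_univ_two, Real.dist_eq, Real.dist_eq]
  nlinarith [abs_nonneg (q 0 - p 0), abs_nonneg (q 1 - p 1), sq_abs (q 0 - p 0),
    sq_abs (q 1 - p 1)]

theorem cross_ratio_estimate_general (β : ℝ) :
    ∃ C : ℝ, 0 < C ∧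
      ∀ z w : EuclideanSpace ℝ (Fin 2), ∀ r : ℝ, 0 < r → 4 * r ≤ dist z w →
      ∀ x ∈ sqQ z r, ∀ y ∈ sqQ z r, ∀ u ∈ sqQ w r, ∀ v ∈ sqQ w r,
        |(dist x u ^ (β ^ 2) * dist y v ^ (β ^ 2)) /
            (dist x v ^ (β ^ 2) * dist y u ^ (β ^ 2)) - 1| ≤
          C * β ^ 2 * r ^ 2 / dist z w ^ 2 := by
  refine ⟨55296 * 64 ^ |β ^ 2 - 1|, by positivity, ?_⟩
  intro z w r hr hzw x hx y hy u hu v hv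
  have hρ : 8 * (3 / 2 * r) ≤ 3 * dist z w := by linarith
  have hx' := dist_le_of_mem_sqQ hx
  have hy' := dist_le_of_mem_sqQ hy
  have hu' := dist_le_of_mem_sqQ hu
  have hv' := dist_le_of_mem_sqQ hv
  rw [← crossRatio_rpow]
  calc |crossRatio x y u v ^ β ^ 2 - 1|
      ≤ |β ^ 2| * 64 ^ |β ^ 2 - 1| * |crossRatio x y u v - 1| :=
        abs_rpow_sub_one_le (by norm_num) (crossRatio_mem_Icc (by positivity) hx' hy' hu' hv' hρ) _
    _ ≤ β ^ 2 * 64 ^ |β ^ 2 - 1| * (24576 * (3 / 2 * r) ^ 2 / dist z w ^ 2) := by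
        rw [abs_sq]
        gcongr
        exact abs_crossRatio_sub_one_le (by positivity) hx' hy' hu' hv' hρ
    _ = 55296 * 64 ^ |β ^ 2 - 1| * β ^ 2 * r ^ 2 / dist z w ^ 2 := by ring

/-- Cross-ratio estimate: if `|z-w| ≥ 4r` and `x,y ∈ Q(z,r)`, `u,v ∈ Q(w,r)`, then
`|𝐫 - 1| ≤ C β² r² / |z-w|²`. -/
theorem cross_ratio_estimate (β : ℝ) (hβ : 0 < β) :
    ∃ C : ℝ, 0 < C ∧
      ∀ z w : EuclideanSpace ℝ (Fin 2), ∀ r : ℝ, 0 < r → 4 * r ≤ dist z w →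
      ∀ x ∈ sqQ z r, ∀ y ∈ sqQ z r, ∀ u ∈ sqQ w r, ∀ v ∈ sqQ w r,
        |(dist x u ^ (β ^ 2) * dist y v ^ (β ^ 2)) /
            (dist x v ^ (β ^ 2) * dist y u ^ (β ^ 2)) - 1| ≤
          C * β ^ 2 * r ^ 2 / dist z w ^ 2 :=
  cross_ratio_estimate_general β
end

section
/- For every real ρ > 0 one has ρ + 1/ρ − 2 = (ρ−1)²/ρ ≥ 0; consequently, for w ∈ ℝ² with |w| ≥ 4 and β ∈ (0,√2), the quantity f(w) := ∫_{Q(0,1)²} ∫_{Q(w,1)²} (𝐫(x,y,u,v) − 1) / (|x−y|^{β²} |u−v|^{β²}) dx dy du dv, where 𝐫(x,y,u,v) = (|x−u|^{β²}|y−v|^{β²})/(|x−v|^{β²}|y−u|^{β²}), is nonnegative and satisfies f(w) ≤ C |w|^{−4} for some constant C depending only on β. -/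
set_option maxHeartbeats 1000000

open MeasureTheory

/-- The cross-ratio quantity `𝐫(x,y,u,v)`. -/
noncomputable def crossR (β : ℝ) (x y u v : EuclideanSpace ℝ (Fin 2)) : ℝ :=
  (dist x u ^ (β ^ 2) * dist y v ^ (β ^ 2)) / (dist x v ^ (β ^ 2) * dist y u ^ (β ^ 2))

/-- The `w`-integrand appearing in the white noise normalisation. -/
noncomputable def fW (β : ℝ) (w : EuclideanSpace ℝ (Fin 2)) : ℝ :=
  ∫ q in (sqQ 0 1 ×ˢ sqQ 0 1) ×ˢ (sqQ w 1 ×ˢ sqQ w 1),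
    (crossR β q.1.1 q.1.2 q.2.1 q.2.2 - 1) /
      (dist q.1.1 q.1.2 ^ (β ^ 2) * dist q.2.1 q.2.2 ^ (β ^ 2))

lemma abs_log_sub_log_le {a b : ℝ} (ha : 0 < a) (hb : 0 < b) :
    |Real.log a - Real.log b| ≤ |a - b| / min a b := by
  wlog hab : b ≤ a generalizing a b
  · have := this hb ha (le_of_not_ge hab)
    rwa [abs_sub_comm, abs_sub_comm b a, min_comm] at this
  · rw [abs_of_nonneg (sub_nonneg.2 (Real.log_le_log hb hab)),
      abs_of_nonneg (by linarith), min_eq_right hab,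
      ← Real.log_div ha.ne' hb.ne']
    have h2 := Real.log_le_sub_one_of_pos (div_pos ha hb)
    have : a / b - 1 = (a - b) / b := by field_simp
    linarith [this ▸ h2]

lemma abs_exp_sub_one_le' (t : ℝ) : |Real.exp t - 1| ≤ |t| * Real.exp |t| := by
  rcases le_total 0 t with h | h
  · rw [abs_of_nonneg h, abs_of_nonneg (by linarith [Real.one_le_exp h] : (0:ℝ) ≤ Real.exp t - 1)]
    have h2 := Real.add_one_le_exp (-t)
    rw [Real.exp_neg] at h2
    have h3 : (1 - t) * Real.exp t ≤ 1 := by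
      calc (1 - t) * Real.exp t ≤ (Real.exp t)⁻¹ * Real.exp t := by
            apply mul_le_mul_of_nonneg_right (by linarith) (Real.exp_pos t).le
        _ = 1 := inv_mul_cancel₀ (Real.exp_ne_zero t)
    nlinarith
  · rw [abs_of_nonpos h, abs_of_nonpos (by simp [Real.exp_le_one_iff.2 h] : Real.exp t - 1 ≤ 0)]
    have h2 := Real.add_one_le_exp t
    have h3 : (1:ℝ) ≤ Real.exp (-t) := Real.one_le_exp (by linarith)
    nlinarith

lemma core_est {s W A B C D : ℝ} (hs : 0 < s) (hs2 : s ≤ 2) (hW : 4 ≤ W)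
    (hA : W ^ 2 / 16 ≤ A) (hA' : A ≤ 4 * W ^ 2) (hB : W ^ 2 / 16 ≤ B) (hB' : B ≤ 4 * W ^ 2)
    (hC : W ^ 2 / 16 ≤ C) (hC' : C ≤ 4 * W ^ 2) (hD : W ^ 2 / 16 ≤ D) (hD' : D ≤ 4 * W ^ 2)
    (hAB : |A - B| ≤ 12 * W) (hDB : |D - B| ≤ 12 * W) (hδ : |A - B - C + D| ≤ 18) :
    0 < (A * D / (B * C)) ^ (s / 2) ∧ (A * D / (B * C)) ^ (s / 2) ≤ 4096 ∧
      ((A * D / (B * C)) ^ (s / 2))⁻¹ ≤ 4096 ∧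
      (A * D / (B * C)) ^ (s / 2) + ((A * D / (B * C)) ^ (s / 2))⁻¹ - 2
        ≤ (4096 ^ 3 * 55296 ^ 2) / W ^ 4 := by
  have hW0 : (0:ℝ) < W := by linarith
  have hA0 : 0 < A := lt_of_lt_of_le (by positivity) hA
  have hB0 : 0 < B := lt_of_lt_of_le (by positivity) hB
  have hC0 : 0 < C := lt_of_lt_of_le (by positivity) hC
  have hD0 : 0 < D := lt_of_lt_of_le (by positivity) hD
  set P := A * D with hPdef
  set Q := B * C with hQdef
  have hP0 : 0 < P := mul_pos hA0 hD0
  have hQ0 : 0 < Q := mul_pos hB0 hC0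
  have hPl : W ^ 4 / 256 ≤ P := by nlinarith
  have hPu : P ≤ 16 * W ^ 4 := by nlinarith
  have hQl : W ^ 4 / 256 ≤ Q := by nlinarith
  have hQu : Q ≤ 16 * W ^ 4 := by nlinarith
  have hPQ : |P - Q| ≤ 216 * W ^ 2 := by
    have hid : P - Q = (A - B) * (D - B) + (A - B - C + D) * B := by ring
    rw [hid]
    have h1 : |(A - B) * (D - B)| ≤ 12 * W * (12 * W) := by
      rw [abs_mul]; exact mul_le_mul hAB hDB (abs_nonneg _) (by positivity)
    have h2 : |(A - B - C + D) * B| ≤ 18 * (4 * W ^ 2) := by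
      rw [abs_mul, abs_of_pos hB0]
      exact mul_le_mul hδ hB' hB0.le (by norm_num)
    calc |(A - B) * (D - B) + (A - B - C + D) * B|
        ≤ |(A - B) * (D - B)| + |(A - B - C + D) * B| := abs_add_le _ _
      _ ≤ 12 * W * (12 * W) + 18 * (4 * W ^ 2) := add_le_add h1 h2
      _ ≤ 216 * W ^ 2 := by nlinarith
  have hlog : |Real.log P - Real.log Q| ≤ 55296 / W ^ 2 := by
    have h1 := abs_log_sub_log_le hP0 hQ0
    have hmin : W ^ 4 / 256 ≤ min P Q := le_min hPl hQl
    have hmin0 : (0:ℝ) < W ^ 4 / 256 := by positivity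
    calc |Real.log P - Real.log Q| ≤ |P - Q| / min P Q := h1
      _ ≤ (216 * W ^ 2) / (W ^ 4 / 256) := by
          apply div_le_div₀ (by positivity) hPQ hmin0 hmin
      _ = 55296 / W ^ 2 := by field_simp; ring
  have hrdef : (A * D / (B * C)) ^ (s / 2)
      = Real.exp ((Real.log P - Real.log Q) * (s / 2)) := by
    rw [show A * D / (B * C) = P / Q from rfl, Real.rpow_def_of_pos (div_pos hP0 hQ0),
      Real.log_div hP0.ne' hQ0.ne']
  set r := (A * D / (B * C)) ^ (s / 2) with hr
  have hr0 : 0 < r := by rw [hrdef]; exact Real.exp_pos _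
  have key : ∀ x : ℝ, 0 < x → x ≤ 4096 → x ^ (s / 2) ≤ 4096 := by
    intro x hx hx'
    rcases le_total x 1 with h | h
    · exact le_trans (Real.rpow_le_one hx.le h (by positivity)) (by norm_num)
    · calc x ^ (s / 2) ≤ x ^ (1:ℝ) := Real.rpow_le_rpow_of_exponent_le h (by linarith)
        _ = x := Real.rpow_one x
        _ ≤ 4096 := hx'
  have hratio : P / Q ≤ 4096 := by rw [div_le_iff₀ hQ0]; linarith
  have hratio' : Q / P ≤ 4096 := by rw [div_le_iff₀ hP0]; linarith
  have hru : r ≤ 4096 := key _ (div_pos hP0 hQ0) hratio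
  have hrinv_eq : r⁻¹ = (Q / P) ^ (s / 2) := by
    rw [hr, show A * D / (B * C) = P / Q from rfl, ← Real.inv_rpow (div_pos hP0 hQ0).le, inv_div]
  have hrinv : r⁻¹ ≤ 4096 := by rw [hrinv_eq]; exact key _ (div_pos hQ0 hP0) hratio'
  refine ⟨hr0, hru, hrinv, ?_⟩
  set t := (Real.log P - Real.log Q) * (s / 2) with htdef
  have ht : |t| ≤ 55296 / W ^ 2 := by
    rw [htdef, abs_mul, abs_of_nonneg (by positivity : (0:ℝ) ≤ s / 2)]
    calc |Real.log P - Real.log Q| * (s / 2) ≤ (55296 / W ^ 2) * 1 := by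
          apply mul_le_mul hlog (by linarith) (by positivity) (by positivity)
      _ = 55296 / W ^ 2 := mul_one _
  have hexp_t : Real.exp |t| ≤ 4096 := by
    rcases abs_choice t with h | h
    · rw [h, ← hrdef]; exact hru
    · rw [h, Real.exp_neg, ← hrdef]; exact hrinv
  have hr1 : |r - 1| ≤ 4096 * 55296 / W ^ 2 := by
    rw [hrdef]
    calc |Real.exp t - 1| ≤ |t| * Real.exp |t| := abs_exp_sub_one_le' t
      _ ≤ (55296 / W ^ 2) * 4096 :=
          mul_le_mul ht hexp_t (Real.exp_pos _).le (by positivity)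
      _ = 4096 * 55296 / W ^ 2 := by ring
  have h1 : r + r⁻¹ - 2 = (r - 1) ^ 2 * r⁻¹ := by field_simp; ring
  have h2 : (r - 1) ^ 2 ≤ (4096 * 55296 / W ^ 2) ^ 2 := by
    rw [← sq_abs]
    exact pow_le_pow_left₀ (abs_nonneg _) hr1 2
  calc r + r⁻¹ - 2 = (r - 1) ^ 2 * r⁻¹ := h1
    _ ≤ (4096 * 55296 / W ^ 2) ^ 2 * 4096 := by
        apply mul_le_mul h2 hrinv (by positivity) (by positivity)
    _ = (4096 ^ 3 * 55296 ^ 2) / W ^ 4 := by field_simp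

local notation "E2" => EuclideanSpace ℝ (Fin 2)

lemma isClosed_sqQ (p : E2) (r : ℝ) : IsClosed (sqQ p r) := by
  have h : sqQ p r = ⋂ i, (fun q : E2 => |q i - p i|) ⁻¹' Set.Iic r := by
    ext q; simp [sqQ]
  rw [h]
  exact isClosed_iInter fun i =>
    IsClosed.preimage (((PiLp.continuous_apply 2 (fun _ : Fin 2 => ℝ) i).sub continuous_const).abs) isClosed_Iic

lemma measurableSet_sqQ (p : E2) (r : ℝ) : MeasurableSet (sqQ p r) :=
  (isClosed_sqQ p r).measurableSet

lemma dist_le_of_mem_sqQ_s9 {q p : E2} (hq : q ∈ sqQ p 1) : dist q p ≤ 3 / 2 := by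
  rw [EuclideanSpace.dist_eq]
  have h : ∑ i, dist (q i) (p i) ^ 2 ≤ 2 := by
    rw [Fin.sum_univ_two]
    have h0 := hq 0
    have h1 := hq 1
    rw [Real.dist_eq, Real.dist_eq]
    nlinarith [abs_nonneg (q 0 - p 0), abs_nonneg (q 1 - p 1), sq_abs (q 0 - p 0),
      sq_abs (q 1 - p 1)]
  calc √(∑ i, dist (q i) (p i) ^ 2) ≤ √((3/2)^2) := by
        apply Real.sqrt_le_sqrt; nlinarith
    _ = 3 / 2 := Real.sqrt_sq (by norm_num)

lemma cross_dist_bounds {w : E2} (hw : 4 ≤ ‖w‖) {a b : E2}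
    (ha : a ∈ sqQ 0 1) (hb : b ∈ sqQ w 1) :
    ‖w‖ / 4 ≤ dist a b ∧ dist a b ≤ 2 * ‖w‖ := by
  have ha' : dist a 0 ≤ 3 / 2 := dist_le_of_mem_sqQ_s9 ha
  have hb' : dist b w ≤ 3 / 2 := dist_le_of_mem_sqQ_s9 hb
  have h0w : dist (0 : E2) w = ‖w‖ := by simp [dist_eq_norm]
  constructor
  · have := dist_triangle4 (0 : E2) a b w
    rw [h0w] at this
    have h1 : dist (0:E2) a = dist a 0 := dist_comm _ _
    linarith
  · have := dist_triangle4 a (0 : E2) w b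
    rw [h0w] at this
    have h1 : dist w b = dist b w := dist_comm _ _
    linarith

lemma dist_le_of_both {p : E2} {a b : E2} (ha : a ∈ sqQ p 1) (hb : b ∈ sqQ p 1) :
    dist a b ≤ 3 := by
  have := dist_triangle a p b
  have h1 := dist_le_of_mem_sqQ_s9 ha
  have h2 := dist_le_of_mem_sqQ_s9 hb
  have h3 : dist p b = dist b p := dist_comm _ _
  linarith


lemma crossR_key {β : ℝ} (hβ : 0 < β) (hβ2 : β ^ 2 ≤ 2) {w x y u v : E2} (hw : 4 ≤ ‖w‖)
    (hx : x ∈ sqQ 0 1) (hy : y ∈ sqQ 0 1) (hu : u ∈ sqQ w 1) (hv : v ∈ sqQ w 1) :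
    0 < crossR β x y u v ∧ crossR β x y u v ≤ 4096 ∧ (crossR β x y u v)⁻¹ ≤ 4096 ∧
      crossR β x y u v + (crossR β x y u v)⁻¹ - 2 ≤ (4096 ^ 3 * 55296 ^ 2) / ‖w‖ ^ 4 := by
  set s := β ^ 2 with hsdef
  have hs : 0 < s := by positivity
  obtain ⟨hxu1, hxu2⟩ := cross_dist_bounds hw hx hu
  obtain ⟨hyu1, hyu2⟩ := cross_dist_bounds hw hy hu
  obtain ⟨hxv1, hxv2⟩ := cross_dist_bounds hw hx hv
  obtain ⟨hyv1, hyv2⟩ := cross_dist_bounds hw hy hv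
  have hxy : dist x y ≤ 3 := dist_le_of_both hx hy
  have huv : dist u v ≤ 3 := dist_le_of_both hu hv
  have hW0 : (0:ℝ) < ‖w‖ := by linarith
  set A := dist x u ^ 2 with hAdef
  set B := dist y u ^ 2 with hBdef
  set C := dist x v ^ 2 with hCdef
  set D := dist y v ^ 2 with hDdef
  -- rewrite crossR
  have epow : ∀ d : ℝ, 0 ≤ d → d ^ s = (d ^ 2) ^ (s / 2) := by
    intro d hd
    rw [← Real.rpow_natCast d 2, ← Real.rpow_mul hd]
    congr 1; ring
  have hrw : crossR β x y u v = (A * D / (B * C)) ^ (s / 2) := by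
    rw [crossR, ← hsdef, epow _ dist_nonneg, epow _ dist_nonneg, epow _ dist_nonneg,
      epow _ dist_nonneg, ← Real.mul_rpow (by positivity) (by positivity),
      ← Real.mul_rpow (by positivity) (by positivity),
      ← Real.div_rpow (by positivity) (by positivity)]
    rw [mul_comm C B]
  -- inner product identity
  have hid : A - B - C + D = -2 * (inner ℝ (x - y) (u - v) : ℝ) := by
    have e1 : A = ‖x‖ ^ 2 - 2 * (inner ℝ x u : ℝ) + ‖u‖ ^ 2 := by
      rw [hAdef, dist_eq_norm]; exact norm_sub_sq_real x u
    have e2 : B = ‖y‖ ^ 2 - 2 * (inner ℝ y u : ℝ) + ‖u‖ ^ 2 := by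
      rw [hBdef, dist_eq_norm]; exact norm_sub_sq_real y u
    have e3 : C = ‖x‖ ^ 2 - 2 * (inner ℝ x v : ℝ) + ‖v‖ ^ 2 := by
      rw [hCdef, dist_eq_norm]; exact norm_sub_sq_real x v
    have e4 : D = ‖y‖ ^ 2 - 2 * (inner ℝ y v : ℝ) + ‖v‖ ^ 2 := by
      rw [hDdef, dist_eq_norm]; exact norm_sub_sq_real y v
    have e5 : (inner ℝ (x - y) (u - v) : ℝ)
        = (inner ℝ x u : ℝ) - (inner ℝ x v : ℝ) - (inner ℝ y u : ℝ) + (inner ℝ y v : ℝ) := by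
      rw [inner_sub_left, inner_sub_right, inner_sub_right]; ring
    rw [e1, e2, e3, e4, e5]; ring
  have hδ : |A - B - C + D| ≤ 18 := by
    rw [hid, abs_mul]
    have h1 : |(inner ℝ (x - y) (u - v) : ℝ)| ≤ ‖x - y‖ * ‖u - v‖ := abs_real_inner_le_norm _ _
    have h2 : ‖x - y‖ ≤ 3 := by rw [← dist_eq_norm]; exact hxy
    have h3 : ‖u - v‖ ≤ 3 := by rw [← dist_eq_norm]; exact huv
    have h4 : ‖x - y‖ * ‖u - v‖ ≤ 9 := by
      nlinarith [norm_nonneg (x - y), norm_nonneg (u - v)]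
    calc |(-2 : ℝ)| * |(inner ℝ (x - y) (u - v) : ℝ)| ≤ 2 * 9 := by
          rw [abs_of_nonpos (by norm_num : (-2:ℝ) ≤ 0)]
          apply mul_le_mul (by norm_num) (le_trans h1 h4) (abs_nonneg _) (by norm_num)
      _ = 18 := by norm_num
  have hAB : |A - B| ≤ 12 * ‖w‖ := by
    have h1 : A - B = (dist x u - dist y u) * (dist x u + dist y u) := by
      rw [hAdef, hBdef]; ring
    rw [h1, abs_mul]
    have h2 : |dist x u - dist y u| ≤ 3 := le_trans (abs_dist_sub_le x y u) hxy
    have h3 : |dist x u + dist y u| ≤ 4 * ‖w‖ := by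
      rw [abs_of_nonneg (by positivity)]; linarith
    calc |dist x u - dist y u| * |dist x u + dist y u| ≤ 3 * (4 * ‖w‖) :=
          mul_le_mul h2 h3 (abs_nonneg _) (by norm_num)
      _ = 12 * ‖w‖ := by ring
  have hDB : |D - B| ≤ 12 * ‖w‖ := by
    have h1 : D - B = (dist y v - dist y u) * (dist y v + dist y u) := by
      rw [hDdef, hBdef]; ring
    rw [h1, abs_mul]
    have h2 : |dist y v - dist y u| ≤ 3 := by
      have := abs_dist_sub_le v u y
      rw [dist_comm v y, dist_comm u y] at this
      exact le_trans this (by rw [dist_comm]; exact huv)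
    have h3 : |dist y v + dist y u| ≤ 4 * ‖w‖ := by
      rw [abs_of_nonneg (by positivity)]; linarith
    calc |dist y v - dist y u| * |dist y v + dist y u| ≤ 3 * (4 * ‖w‖) :=
          mul_le_mul h2 h3 (abs_nonneg _) (by norm_num)
      _ = 12 * ‖w‖ := by ring
  have sqb : ∀ d : ℝ, ‖w‖ / 4 ≤ d → d ≤ 2 * ‖w‖ → ‖w‖ ^ 2 / 16 ≤ d ^ 2 ∧ d ^ 2 ≤ 4 * ‖w‖ ^ 2 := by
    intro d h1 h2
    constructor <;> nlinarith
  obtain ⟨hA1, hA2⟩ := sqb _ hxu1 hxu2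
  obtain ⟨hB1, hB2⟩ := sqb _ hyu1 hyu2
  obtain ⟨hC1, hC2⟩ := sqb _ hxv1 hxv2
  obtain ⟨hD1, hD2⟩ := sqb _ hyv1 hyv2
  rw [hrw]
  exact core_est hs hβ2 hw hA1 hA2 hB1 hB2 hC1 hC2 hD1 hD2 hAB hDB hδ

lemma lintegral_ball_lt_top {s : ℝ} (hs : 0 < s) (hs2 : s < 2) :
    ∫⁻ z in Metric.ball (0 : E2) 4, ENNReal.ofReal ((‖z‖ ^ s)⁻¹) < ⊤ := by
  classical
  set f : E2 → ENNReal := fun z => ENNReal.ofReal ((‖z‖ ^ s)⁻¹) with hf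
  set Bn : ℕ → Set E2 := fun n => Metric.ball 0 (4 * (2:ℝ)⁻¹ ^ n) with hBn
  set An : ℕ → Set E2 := fun n => Bn n \ Bn (n + 1) with hAn
  have hcover : Metric.ball (0 : E2) 4 ⊆ {0} ∪ ⋃ n, An n := by
    intro z hz
    by_cases hz0 : z = 0
    · exact Or.inl (by simp [hz0])
    · right
      have hzpos : 0 < ‖z‖ := norm_pos_iff.2 hz0
      have hex : ∃ n : ℕ, 4 * (2:ℝ)⁻¹ ^ (n + 1) ≤ ‖z‖ := by
        obtain ⟨n, hn⟩ := exists_pow_lt_of_lt_one (show (0:ℝ) < ‖z‖ / 4 by positivity)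
          (by norm_num : (2:ℝ)⁻¹ < 1)
        refine ⟨n, ?_⟩
        have h2 : (2:ℝ)⁻¹ ^ (n + 1) ≤ (2:ℝ)⁻¹ ^ n :=
          pow_le_pow_of_le_one (by norm_num) (by norm_num) (Nat.le_succ n)
        nlinarith
      set n := Nat.find hex with hn
      have hspec : 4 * (2:ℝ)⁻¹ ^ (n + 1) ≤ ‖z‖ := Nat.find_spec hex
      refine Set.mem_iUnion.2 ⟨n, ?_, ?_⟩
      · cases hnn : n with
        | zero => simpa [hBn, mem_ball_zero_iff] using hz
        | succ m =>
          have hmin : ¬ (4 * (2:ℝ)⁻¹ ^ (m + 1) ≤ ‖z‖) := by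
            have := Nat.find_min hex (m := m) (by omega)
            exact this
          push_neg at hmin
          simpa [hBn, mem_ball_zero_iff] using hmin
      · simp only [hBn, mem_ball_zero_iff, Set.mem_setOf_eq]
        exact not_lt.2 hspec
  set K := volume (Metric.ball (0 : E2) 1) with hK
  have hKlt : K < ⊤ := measure_ball_lt_top
  set q : ℝ := (2:ℝ) ^ s / 4 with hq
  have hq0 : 0 ≤ q := by positivity
  have hq1 : q < 1 := by
    have : (2:ℝ) ^ s < (2:ℝ) ^ (2:ℝ) := Real.rpow_lt_rpow_of_exponent_lt (by norm_num) hs2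
    have h4 : (2:ℝ) ^ (2:ℝ) = 4 := by
      rw [show ((2:ℝ):ℝ) = ((2:ℕ):ℝ) by norm_num, Real.rpow_natCast]; norm_num
    rw [hq]; linarith [h4 ▸ this]
  have hterm : ∀ n : ℕ, ∫⁻ z in An n, f z ≤ ENNReal.ofReal (16 * q ^ n) * K := by
    intro n
    set ρ : ℝ := 4 * (2:ℝ)⁻¹ ^ (n + 1) with hρ
    have hρ0 : 0 < ρ := by positivity
    have hfb : ∀ z ∈ An n, f z ≤ ENNReal.ofReal ((ρ ^ s)⁻¹) := by
      intro z hz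
      have hz1 : ρ ≤ ‖z‖ := by
        have := hz.2
        simp only [hBn, mem_ball_zero_iff, Set.mem_setOf_eq] at this
        exact not_lt.1 this
      have h2 : ρ ^ s ≤ ‖z‖ ^ s := Real.rpow_le_rpow hρ0.le hz1 hs.le
      exact ENNReal.ofReal_le_ofReal (by
        apply inv_anti₀ (by positivity) h2)
    have h3 : ∫⁻ z in An n, f z ≤ ENNReal.ofReal ((ρ ^ s)⁻¹) * volume (An n) := by
      calc ∫⁻ z in An n, f z ≤ ∫⁻ _ in An n, ENNReal.ofReal ((ρ ^ s)⁻¹) :=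
            setLIntegral_mono measurable_const hfb
        _ = ENNReal.ofReal ((ρ ^ s)⁻¹) * volume (An n) := setLIntegral_const _ _
    have h4 : volume (An n) ≤ ENNReal.ofReal ((4 * (2:ℝ)⁻¹ ^ n) ^ 2) * K := by
      calc volume (An n) ≤ volume (Bn n) := measure_mono Set.diff_subset
        _ = ENNReal.ofReal ((4 * (2:ℝ)⁻¹ ^ n) ^ Module.finrank ℝ E2) * K :=
            Measure.addHaar_ball volume 0 (by positivity)
        _ = ENNReal.ofReal ((4 * (2:ℝ)⁻¹ ^ n) ^ 2) * K := by
            rw [finrank_euclideanSpace_fin]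
    have hreal : (ρ ^ s)⁻¹ * (4 * (2:ℝ)⁻¹ ^ n) ^ 2 ≤ 16 * q ^ n := by
      have hb0 : (0:ℝ) < (2:ℝ)⁻¹ ^ n := by positivity
      have hρge : (2:ℝ)⁻¹ ^ n ≤ ρ := by
        rw [hρ, pow_succ]; nlinarith
      have h5 : ((2:ℝ)⁻¹ ^ n) ^ s ≤ ρ ^ s := Real.rpow_le_rpow (by positivity) hρge hs.le
      have h6 : (ρ ^ s)⁻¹ ≤ (((2:ℝ)⁻¹ ^ n) ^ s)⁻¹ :=
        inv_anti₀ (by positivity) h5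
      have h7 : (((2:ℝ)⁻¹ ^ n) ^ s)⁻¹ = ((2:ℝ) ^ s) ^ n := by
        rw [← Real.rpow_natCast ((2:ℝ)⁻¹) n, ← Real.rpow_mul (by norm_num), mul_comm,
          Real.rpow_mul (by norm_num), Real.rpow_natCast, Real.inv_rpow (by norm_num),
          inv_pow, inv_inv]
      have h8 : (4 * (2:ℝ)⁻¹ ^ n) ^ 2 = 16 * ((4:ℝ)⁻¹) ^ n := by
        rw [mul_pow, ← pow_mul, mul_comm n 2, pow_mul]; norm_num
      have h9 : ((2:ℝ) ^ s) ^ n * (16 * ((4:ℝ)⁻¹) ^ n) = 16 * q ^ n := by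
        rw [hq, div_pow, inv_pow]; ring
      calc (ρ ^ s)⁻¹ * (4 * (2:ℝ)⁻¹ ^ n) ^ 2
          ≤ ((2:ℝ) ^ s) ^ n * (16 * ((4:ℝ)⁻¹) ^ n) := by
            rw [h8, ← h7]
            exact mul_le_mul_of_nonneg_right h6 (by positivity)
        _ = 16 * q ^ n := h9
    calc ∫⁻ z in An n, f z ≤ ENNReal.ofReal ((ρ ^ s)⁻¹) * volume (An n) := h3
      _ ≤ ENNReal.ofReal ((ρ ^ s)⁻¹) * (ENNReal.ofReal ((4 * (2:ℝ)⁻¹ ^ n) ^ 2) * K) :=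
          mul_le_mul_right h4 _
      _ = ENNReal.ofReal ((ρ ^ s)⁻¹ * (4 * (2:ℝ)⁻¹ ^ n) ^ 2) * K := by
          rw [← mul_assoc, ← ENNReal.ofReal_mul (by positivity)]
      _ ≤ ENNReal.ofReal (16 * q ^ n) * K :=
          mul_le_mul_left (ENNReal.ofReal_le_ofReal hreal) K
  have hsum : ∑' n, ∫⁻ z in An n, f z ≤ ENNReal.ofReal 16 * (1 - ENNReal.ofReal q)⁻¹ * K := by
    calc ∑' n, ∫⁻ z in An n, f z ≤ ∑' n, ENNReal.ofReal (16 * q ^ n) * K :=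
          ENNReal.tsum_le_tsum hterm
      _ = (∑' n, ENNReal.ofReal 16 * (ENNReal.ofReal q) ^ n) * K := by
          rw [ENNReal.tsum_mul_right]
          congr 1
          refine tsum_congr fun n => ?_
          rw [ENNReal.ofReal_mul (by norm_num), ENNReal.ofReal_pow hq0]
      _ = ENNReal.ofReal 16 * (1 - ENNReal.ofReal q)⁻¹ * K := by
          rw [ENNReal.tsum_mul_left, ENNReal.tsum_geometric]
  have hfin : ENNReal.ofReal 16 * (1 - ENNReal.ofReal q)⁻¹ * K < ⊤ := by
    apply ENNReal.mul_lt_top (ENNReal.mul_lt_top ENNReal.ofReal_lt_top ?_) hKlt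
    exact ENNReal.inv_lt_top.2 (tsub_pos_of_lt (ENNReal.ofReal_lt_one.2 hq1))
  calc ∫⁻ z in Metric.ball (0 : E2) 4, f z
      ≤ ∫⁻ z in ({0} ∪ ⋃ n, An n : Set E2), f z := lintegral_mono_set hcover
    _ ≤ (∫⁻ z in ({0} : Set E2), f z) + ∫⁻ z in ⋃ n, An n, f z := lintegral_union_le _ _ _
    _ ≤ 0 + ∑' n, ∫⁻ z in An n, f z :=
        add_le_add (le_of_eq (setLIntegral_measure_zero _ _ (measure_singleton 0)))
          (lintegral_iUnion_le _ _)
    _ < ⊤ := by rw [zero_add]; exact lt_of_le_of_lt hsum hfin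

lemma integrableOn_inv_dist {s : ℝ} (hs : 0 < s) (hs2 : s < 2) :
    IntegrableOn (fun p : E2 × E2 => (dist p.1 p.2 ^ s)⁻¹) (sqQ 0 1 ×ˢ sqQ 0 1) := by
  have hmeas : Measurable fun p : E2 × E2 => (dist p.1 p.2 ^ s)⁻¹ := by fun_prop
  refine ⟨hmeas.aestronglyMeasurable, ?_⟩
  rw [hasFiniteIntegral_iff_norm]
  have hnn : ∀ p : E2 × E2, ENNReal.ofReal ‖(dist p.1 p.2 ^ s)⁻¹‖
      = ENNReal.ofReal ((dist p.1 p.2 ^ s)⁻¹) := fun p => by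
    rw [Real.norm_of_nonneg (by positivity)]
  simp_rw [hnn]
  rw [Measure.volume_eq_prod, ← Measure.prod_restrict,
    lintegral_prod _ (hmeas.ennreal_ofReal.aemeasurable)]
  set J := ∫⁻ z in Metric.ball (0 : E2) 4, ENNReal.ofReal ((‖z‖ ^ s)⁻¹) with hJdef
  have hJ : J < ⊤ := lintegral_ball_lt_top hs hs2
  have hinner : ∀ x ∈ sqQ (0:E2) 1,
      (∫⁻ y in sqQ (0:E2) 1, ENNReal.ofReal ((dist x y ^ s)⁻¹)) ≤ J := by
    intro x hx
    have hsub : sqQ (0:E2) 1 ⊆ Metric.ball x 4 := by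
      intro y hy
      have h1 : dist y x ≤ 3 := by
        have h2 := dist_le_of_mem_sqQ_s9 hy
        have h3 := dist_le_of_mem_sqQ_s9 hx
        have := dist_triangle y (0 : E2) x
        have h4 : dist (0:E2) x = dist x 0 := dist_comm _ _
        linarith
      exact Metric.mem_ball.2 (lt_of_le_of_lt h1 (by norm_num))
    have heq : (∫⁻ y in Metric.ball x 4, ENNReal.ofReal ((dist x y ^ s)⁻¹)) = J := by
      have hmp := measurePreserving_add_right (volume : Measure E2) x
      have hemb : MeasurableEmbedding (fun z : E2 => z + x) :=
        (MeasurableEquiv.addRight x).measurableEmbedding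
      have hkey := hmp.setLIntegral_comp_preimage_emb hemb
        (fun y => ENNReal.ofReal ((dist x y ^ s)⁻¹)) (Metric.ball x 4)
      have hpre : (fun z : E2 => z + x) ⁻¹' Metric.ball x 4 = Metric.ball 0 4 := by
        ext z
        simp [Metric.mem_ball, dist_eq_norm, add_sub_cancel_right]
      rw [hpre] at hkey
      rw [← hkey, hJdef]
      have hd : ∀ z : E2, dist x (z + x) = ‖z‖ := by
        intro z
        rw [dist_eq_norm]
        simp
      simp_rw [hd]
    calc (∫⁻ y in sqQ (0:E2) 1, ENNReal.ofReal ((dist x y ^ s)⁻¹))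
        ≤ ∫⁻ y in Metric.ball x 4, ENNReal.ofReal ((dist x y ^ s)⁻¹) := lintegral_mono_set hsub
      _ = J := heq
  have hQfin : volume (sqQ (0:E2) 1) < ⊤ := by
    have hsub : sqQ (0:E2) 1 ⊆ Metric.closedBall 0 (3/2) := fun q hq =>
      Metric.mem_closedBall.2 (dist_le_of_mem_sqQ_s9 hq)
    exact lt_of_le_of_lt (measure_mono hsub) measure_closedBall_lt_top
  calc (∫⁻ x in sqQ (0:E2) 1, ∫⁻ y in sqQ (0:E2) 1, ENNReal.ofReal ((dist x y ^ s)⁻¹))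
      ≤ ∫⁻ _ in sqQ (0:E2) 1, J := setLIntegral_mono measurable_const hinner
    _ = J * volume (sqQ (0:E2) 1) := setLIntegral_const _ _
    _ < ⊤ := ENNReal.mul_lt_top hJ hQfin

section shift
variable (w : E2)

lemma shift_mp : MeasurePreserving (fun p : E2 × E2 => (p.1 + w, p.2 + w))
    (volume : Measure (E2 × E2)) volume := by
  rw [Measure.volume_eq_prod]
  exact (measurePreserving_add_right volume w).prod (measurePreserving_add_right volume w)

lemma shift_emb : MeasurableEmbedding (fun p : E2 × E2 => (p.1 + w, p.2 + w)) :=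
  ((MeasurableEquiv.addRight w).prodCongr (MeasurableEquiv.addRight w)).measurableEmbedding

lemma shift_pre : (fun p : E2 × E2 => (p.1 + w, p.2 + w)) ⁻¹' (sqQ w 1 ×ˢ sqQ w 1)
    = sqQ 0 1 ×ˢ sqQ 0 1 := by
  have h : ∀ q : E2, q + w ∈ sqQ w 1 ↔ q ∈ sqQ 0 1 := by
    intro q
    constructor <;> intro hq i <;> have := hq i <;>
      simpa [PiLp.add_apply, sub_zero, add_sub_cancel_right] using this
  ext p
  simp only [Set.mem_preimage, Set.mem_prod]
  rw [h, h]

lemma integrableOn_inv_dist_w {s : ℝ} (hs : 0 < s) (hs2 : s < 2) :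
    IntegrableOn (fun p : E2 × E2 => (dist p.1 p.2 ^ s)⁻¹) (sqQ w 1 ×ˢ sqQ w 1) := by
  rw [← (shift_mp w).integrableOn_comp_preimage (shift_emb w), shift_pre]
  have h : ((fun p : E2 × E2 => (dist p.1 p.2 ^ s)⁻¹) ∘ fun p : E2 × E2 => (p.1 + w, p.2 + w))
      = fun p : E2 × E2 => (dist p.1 p.2 ^ s)⁻¹ := by
    funext p
    simp [Function.comp, dist_add_right]
  rw [h]
  exact integrableOn_inv_dist hs hs2

lemma integral_inv_dist_w (s : ℝ) :
    ∫ p in sqQ w 1 ×ˢ sqQ w 1, (dist p.1 p.2 ^ s)⁻¹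
      = ∫ p in sqQ (0:E2) 1 ×ˢ sqQ (0:E2) 1, (dist p.1 p.2 ^ s)⁻¹ := by
  rw [← (shift_mp w).setIntegral_preimage_emb (shift_emb w)
    (fun p : E2 × E2 => (dist p.1 p.2 ^ s)⁻¹) (sqQ w 1 ×ˢ sqQ w 1), shift_pre]
  congr 1
  funext p
  rw [dist_add_right]

end shift

section swap

lemma swap_mp : MeasurePreserving (fun q : (E2 × E2) × (E2 × E2) => (q.1, (q.2.2, q.2.1)))
    (volume : Measure ((E2 × E2) × (E2 × E2))) volume := by
  have hsw : MeasurePreserving (Prod.swap : E2 × E2 → E2 × E2)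
      (volume : Measure (E2 × E2)) volume := by
    rw [Measure.volume_eq_prod]
    exact Measure.measurePreserving_swap
  rw [Measure.volume_eq_prod]
  exact (MeasurePreserving.id _).prod hsw

lemma swap_emb : MeasurableEmbedding (fun q : (E2 × E2) × (E2 × E2) => (q.1, (q.2.2, q.2.1))) :=
  ((MeasurableEquiv.refl (E2 × E2)).prodCongr
    (MeasurableEquiv.prodComm : (E2 × E2) ≃ᵐ (E2 × E2))).measurableEmbedding

lemma swap_pre (w : E2) : (fun q : (E2 × E2) × (E2 × E2) => (q.1, (q.2.2, q.2.1))) ⁻¹'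
    ((sqQ 0 1 ×ˢ sqQ 0 1) ×ˢ (sqQ w 1 ×ˢ sqQ w 1))
    = (sqQ 0 1 ×ˢ sqQ 0 1) ×ˢ (sqQ w 1 ×ˢ sqQ w 1) := by
  ext q
  simp only [Set.mem_preimage, Set.mem_prod]
  tauto

lemma crossR_swap (β : ℝ) (x y u v : E2) : crossR β x y v u = (crossR β x y u v)⁻¹ := by
  rw [crossR, crossR, inv_div]

end swap

/-- Symmetrization: `ρ + 1/ρ - 2 = (ρ-1)²/ρ ≥ 0`, and consequently `0 ≤ f(w) ≤ C |w|⁻⁴`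
for `|w| ≥ 4`. -/
theorem symmetrization_positivity_and_decay :
    (∀ ρ : ℝ, 0 < ρ → ρ + 1 / ρ - 2 = (ρ - 1) ^ 2 / ρ ∧ 0 ≤ ρ + 1 / ρ - 2) ∧
    ∀ β : ℝ, β ∈ Set.Ioo 0 (Real.sqrt 2) →
      ∃ C : ℝ, 0 < C ∧
        ∀ w : EuclideanSpace ℝ (Fin 2), 4 ≤ ‖w‖ →
          0 ≤ fW β w ∧ fW β w ≤ C * ‖w‖ ^ (-(4 : ℝ)) := by
  constructor
  · intro ρ hρ
    have h : ρ + 1 / ρ - 2 = (ρ - 1) ^ 2 / ρ := by field_simp; ring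
    exact ⟨h, h ▸ by positivity⟩
  · rintro β ⟨hβ0, hβ2⟩
    have hs : 0 < β ^ 2 := by positivity
    have hs2 : β ^ 2 < 2 := by
      have h2 : (Real.sqrt 2) ^ 2 = 2 := Real.sq_sqrt (by norm_num)
      calc β ^ 2 < (Real.sqrt 2) ^ 2 := by
            apply pow_lt_pow_left₀ hβ2 hβ0.le (by norm_num)
        _ = 2 := h2
    set s := β ^ 2 with hsdef
    set I := ∫ p in sqQ (0:E2) 1 ×ˢ sqQ (0:E2) 1, (dist p.1 p.2 ^ s)⁻¹ with hI
    have hI0 : 0 ≤ I :=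
      setIntegral_nonneg ((measurableSet_sqQ _ _).prod (measurableSet_sqQ _ _))
        (fun p _ => by positivity)
    set Cnum : ℝ := 4096 ^ 3 * 55296 ^ 2 with hCnum
    have hCnum0 : (0:ℝ) < Cnum := by norm_num [hCnum]
    refine ⟨Cnum * (I ^ 2 + 1), by positivity, ?_⟩
    intro w hw
    have hW0 : (0:ℝ) < ‖w‖ := by linarith
    set S := (sqQ (0:E2) 1 ×ˢ sqQ (0:E2) 1) ×ˢ (sqQ w 1 ×ˢ sqQ w 1) with hS
    have hSmeas : MeasurableSet S :=
      (((measurableSet_sqQ _ _).prod (measurableSet_sqQ _ _)).prod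
        ((measurableSet_sqQ _ _).prod (measurableSet_sqQ _ _)))
    set H : (E2 × E2) × (E2 × E2) → ℝ :=
      fun q => (dist q.1.1 q.1.2 ^ s)⁻¹ * (dist q.2.1 q.2.2 ^ s)⁻¹ with hH
    have hIntH : IntegrableOn H S := by
      rw [hS, IntegrableOn, Measure.volume_eq_prod, ← Measure.prod_restrict]
      exact Integrable.mul_prod (integrableOn_inv_dist hs hs2) (integrableOn_inv_dist_w w hs hs2)
    have hHval : ∫ q in S, H q = I * I := by
      simp only [hH, hS]
      rw [Measure.volume_eq_prod]
      rw [setIntegral_prod_mul (fun p : E2 × E2 => (dist p.1 p.2 ^ s)⁻¹)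
        (fun p : E2 × E2 => (dist p.1 p.2 ^ s)⁻¹) _ _]
      rw [integral_inv_dist_w w s, hI]
    set F : (E2 × E2) × (E2 × E2) → ℝ := fun q =>
      (crossR β q.1.1 q.1.2 q.2.1 q.2.2 - 1) /
        (dist q.1.1 q.1.2 ^ s * dist q.2.1 q.2.2 ^ s) with hF
    set F2 : (E2 × E2) × (E2 × E2) → ℝ := fun q =>
      ((crossR β q.1.1 q.1.2 q.2.1 q.2.2)⁻¹ - 1) /
        (dist q.1.1 q.1.2 ^ s * dist q.2.1 q.2.2 ^ s) with hF2
    have hmcross : Measurable fun q : (E2 × E2) × (E2 × E2) =>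
        crossR β q.1.1 q.1.2 q.2.1 q.2.2 := by
      unfold crossR; fun_prop
    have hmF : Measurable F := by
      rw [hF]; exact (hmcross.sub measurable_const).div (by fun_prop)
    have hmF2 : Measurable F2 := by
      rw [hF2]; exact ((hmcross.inv).sub measurable_const).div (by fun_prop)
    have hkey : ∀ q ∈ S, 0 < crossR β q.1.1 q.1.2 q.2.1 q.2.2 ∧
        crossR β q.1.1 q.1.2 q.2.1 q.2.2 ≤ 4096 ∧
        (crossR β q.1.1 q.1.2 q.2.1 q.2.2)⁻¹ ≤ 4096 ∧
        crossR β q.1.1 q.1.2 q.2.1 q.2.2 + (crossR β q.1.1 q.1.2 q.2.1 q.2.2)⁻¹ - 2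
          ≤ Cnum / ‖w‖ ^ 4 := by
      intro q hq
      exact crossR_key hβ0 hs2.le hw hq.1.1 hq.1.2 hq.2.1 hq.2.2
    have hHnn : ∀ q : (E2 × E2) × (E2 × E2), 0 ≤ H q := fun q => by
      simp only [hH]; positivity
    have habs : ∀ q ∈ S, |F q| ≤ 4097 * H q ∧ |F2 q| ≤ 4097 * H q := by
      intro q hq
      obtain ⟨h1, h2, h3, h4⟩ := hkey q hq
      have h3' : 0 < (crossR β q.1.1 q.1.2 q.2.1 q.2.2)⁻¹ := inv_pos.2 h1
      have hD0 : (0:ℝ) ≤ dist q.1.1 q.1.2 ^ s * dist q.2.1 q.2.2 ^ s := by positivity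
      have hDH : 4097 / (dist q.1.1 q.1.2 ^ s * dist q.2.1 q.2.2 ^ s) = 4097 * H q := by
        simp only [hH]; rw [div_eq_mul_inv, mul_inv]
      constructor
      · simp only [hF]
        rw [abs_div, abs_of_nonneg hD0, ← hDH]
        apply div_le_div_of_nonneg_right ?_ hD0
        rw [abs_le]; constructor <;> linarith
      · simp only [hF2]
        rw [abs_div, abs_of_nonneg hD0, ← hDH]
        apply div_le_div_of_nonneg_right ?_ hD0
        rw [abs_le]; constructor <;> linarith
    have hIntF : IntegrableOn F S := by
      apply Integrable.mono' (hIntH.const_mul 4097) hmF.aestronglyMeasurable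
      rw [ae_restrict_iff' hSmeas]
      exact Filter.Eventually.of_forall fun q hq => by
        rw [Real.norm_eq_abs]; exact (habs q hq).1
    have hIntF2 : IntegrableOn F2 S := by
      apply Integrable.mono' (hIntH.const_mul 4097) hmF2.aestronglyMeasurable
      rw [ae_restrict_iff' hSmeas]
      exact Filter.Eventually.of_forall fun q hq => by
        rw [Real.norm_eq_abs]; exact (habs q hq).2
    have hFσ : ∀ x : (E2 × E2) × (E2 × E2),
        F ((fun q : (E2 × E2) × (E2 × E2) => (q.1, (q.2.2, q.2.1))) x) = F2 x := by
      intro x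
      simp only [hF, hF2]
      rw [crossR_swap β x.1.1 x.1.2 x.2.1 x.2.2, dist_comm x.2.2 x.2.1]
    have hswap : ∫ q in S, F q = ∫ q in S, F2 q := by
      have hkey2 := swap_mp.setIntegral_preimage_emb swap_emb F S
      rw [hS, swap_pre w, ← hS] at hkey2
      simp_rw [hFσ] at hkey2
      exact hkey2.symm
    have hfWF : fW β w = ∫ q in S, F q := rfl
    have h2fW : fW β w + fW β w = ∫ q in S, (F q + F2 q) := by
      rw [integral_add hIntF hIntF2, hfWF, hswap]
    have hsumid : ∀ q, F q + F2 q = (crossR β q.1.1 q.1.2 q.2.1 q.2.2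
        + (crossR β q.1.1 q.1.2 q.2.1 q.2.2)⁻¹ - 2) /
          (dist q.1.1 q.1.2 ^ s * dist q.2.1 q.2.2 ^ s) := by
      intro q
      simp only [hF, hF2]
      rw [← add_div]
      congr 1
      ring
    have hG0 : 0 ≤ ∫ q in S, (F q + F2 q) := by
      apply setIntegral_nonneg hSmeas
      intro q hq
      obtain ⟨h1, h2, h3, h4⟩ := hkey q hq
      rw [hsumid q]
      apply div_nonneg ?_ (by positivity)
      have hrr : crossR β q.1.1 q.1.2 q.2.1 q.2.2 * (crossR β q.1.1 q.1.2 q.2.1 q.2.2)⁻¹ = 1 :=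
        mul_inv_cancel₀ h1.ne'
      nlinarith [sq_nonneg (crossR β q.1.1 q.1.2 q.2.1 q.2.2 - 1)]
    have hGle : ∫ q in S, (F q + F2 q) ≤ (Cnum / ‖w‖ ^ 4) * (I * I) := by
      have hb : ∀ q ∈ S, F q + F2 q ≤ (Cnum / ‖w‖ ^ 4) * H q := by
        intro q hq
        obtain ⟨h1, h2, h3, h4⟩ := hkey q hq
        rw [hsumid q]
        have hD0 : (0:ℝ) ≤ dist q.1.1 q.1.2 ^ s * dist q.2.1 q.2.2 ^ s := by positivity
        calc (crossR β q.1.1 q.1.2 q.2.1 q.2.2 + (crossR β q.1.1 q.1.2 q.2.1 q.2.2)⁻¹ - 2) /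
              (dist q.1.1 q.1.2 ^ s * dist q.2.1 q.2.2 ^ s)
            ≤ (Cnum / ‖w‖ ^ 4) / (dist q.1.1 q.1.2 ^ s * dist q.2.1 q.2.2 ^ s) :=
              div_le_div_of_nonneg_right h4 hD0
          _ = (Cnum / ‖w‖ ^ 4) * H q := by
              simp only [hH]; rw [div_eq_mul_inv, mul_inv]
      calc ∫ q in S, (F q + F2 q)
          ≤ ∫ q in S, (Cnum / ‖w‖ ^ 4) * H q :=
            setIntegral_mono_on (hIntF.add hIntF2) (hIntH.const_mul _) hSmeas hb
        _ = (Cnum / ‖w‖ ^ 4) * ∫ q in S, H q := integral_const_mul _ _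
        _ = (Cnum / ‖w‖ ^ 4) * (I * I) := by rw [hHval]
    constructor
    · linarith [h2fW ▸ hG0]
    · have hle : fW β w + fW β w ≤ (Cnum / ‖w‖ ^ 4) * (I * I) := h2fW ▸ hGle
      have hw4 : ‖w‖ ^ (-(4:ℝ)) = (‖w‖ ^ 4)⁻¹ := by
        rw [Real.rpow_neg (norm_nonneg w), show (4:ℝ) = ((4:ℕ):ℝ) by norm_num,
          Real.rpow_natCast]
      rw [hw4]
      have hinv : 0 < (‖w‖ ^ 4)⁻¹ := by positivity
      have hre : (Cnum / ‖w‖ ^ 4) * (I * I) = Cnum * I ^ 2 * (‖w‖ ^ 4)⁻¹ := by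
        rw [div_eq_mul_inv]; ring
      have h5 : Cnum * I ^ 2 * (‖w‖ ^ 4)⁻¹ ≤ Cnum * (I ^ 2 + 1) * (‖w‖ ^ 4)⁻¹ := by
        nlinarith
      have h0 : 0 ≤ fW β w := by linarith [h2fW ▸ hG0]
      linarith [hre ▸ hle]
end

section
/- There exists C > 0 such that for all δ > 0, ∫_{B(0,δ)×B(0,δ)} |log(|y+z|/|y−z|)| dy dz ≤ C δ⁴, where B(0,δ) is the Euclidean ball of radius δ in ℝ². -/
open MeasureTheory Pointwise

/-- `∫_{B(0,δ)²} |log(|y+z|/|y−z|)| ≤ C δ⁴` in `ℝ²`. -/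
theorem log_ratio_integral_bound :
    ∃ C : ℝ, 0 < C ∧
      ∀ δ : ℝ, 0 < δ →
        (∫ q in (Metric.ball (0 : EuclideanSpace ℝ (Fin 2)) δ) ×ˢ
            (Metric.ball (0 : EuclideanSpace ℝ (Fin 2)) δ),
          |Real.log (‖q.1 + q.2‖ / ‖q.1 - q.2‖)|) ≤ C * δ ^ 4 := by
  haveI : (volume : Measure (EuclideanSpace ℝ (Fin 2) × EuclideanSpace ℝ (Fin 2))).IsAddHaarMeasure :=
    MeasureTheory.Measure.prod.instIsAddHaarMeasure volume volume
  set f : EuclideanSpace ℝ (Fin 2) × EuclideanSpace ℝ (Fin 2) → ℝ :=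
    fun q => |Real.log (‖q.1 + q.2‖ / ‖q.1 - q.2‖)| with hf
  set B1 : Set (EuclideanSpace ℝ (Fin 2) × EuclideanSpace ℝ (Fin 2)) :=
    (Metric.ball (0 : EuclideanSpace ℝ (Fin 2)) 1) ×ˢ
      (Metric.ball (0 : EuclideanSpace ℝ (Fin 2)) 1) with hB1
  refine ⟨max (∫ q in B1, f q) 1, lt_of_lt_of_le one_pos (le_max_right _ _), fun δ hδ => ?_⟩
  have hdim : Module.finrank ℝ (EuclideanSpace ℝ (Fin 2) × EuclideanSpace ℝ (Fin 2)) = 4 := by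
    simp [Module.finrank_prod]
  have hsmul : δ • B1 = (Metric.ball (0 : EuclideanSpace ℝ (Fin 2)) δ) ×ˢ
      (Metric.ball (0 : EuclideanSpace ℝ (Fin 2)) δ) := by
    ext q
    simp only [Set.mem_smul_set_iff_inv_smul_mem₀ hδ.ne', hB1, Set.mem_prod,
      mem_ball_zero_iff, Prod.smul_fst, Prod.smul_snd, norm_smul, norm_inv,
      Real.norm_eq_abs, abs_of_pos hδ]
    rw [inv_mul_lt_iff₀ hδ, inv_mul_lt_iff₀ hδ]
    simp
  have hfs : ∀ q : EuclideanSpace ℝ (Fin 2) × EuclideanSpace ℝ (Fin 2), f (δ • q) = f q := by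
    intro q
    simp only [hf, Prod.smul_fst, Prod.smul_snd, ← smul_add, ← smul_sub, norm_smul,
      Real.norm_eq_abs, abs_of_pos hδ]
    rw [mul_div_mul_left _ _ hδ.ne']
  have key := MeasureTheory.Measure.setIntegral_comp_smul_of_pos
    (volume : Measure (EuclideanSpace ℝ (Fin 2) × EuclideanSpace ℝ (Fin 2))) f B1 hδ
  simp only [hfs, hsmul, hdim] at key
  have heq : (∫ q in (Metric.ball (0 : EuclideanSpace ℝ (Fin 2)) δ) ×ˢ
      (Metric.ball (0 : EuclideanSpace ℝ (Fin 2)) δ), f q) = δ ^ 4 * ∫ q in B1, f q := by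
    rw [key, smul_eq_mul, ← mul_assoc, mul_inv_cancel₀ (by positivity), one_mul]
  rw [heq, mul_comm]
  gcongr
  exact le_max_left _ _
end

section
/- Let β ∈ (0,√2) and let ν be a probability measure on [0,∞) such that for some constant c** ∈ ℝ, ∫₀^∞ x^{2N} ν(dx) = N^{β²N/2} e^{c**N + o(N)} as N → ∞. Set c* = (β²/2) e^{−1 − 2c**/β²} > 0. Then for every d* < c*, there exists t₀ such that ν([t,∞)) ≤ e^{−d* t^{4/β²}} for all t ≥ t₀; in particular limsup_{t→∞} t^{−4/β²} log ν([t,∞)) ≤ −c*. -/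
set_option maxHeartbeats 1600000
open MeasureTheory Filter

lemma aux_integrable_of_ne_zero {ν : Measure ℝ} {f : ℝ → ℝ} (h : ∫ x, f x ∂ν ≠ 0) :
    Integrable f ν := by
  by_contra hc
  exact h (integral_undef hc)

lemma aux_markov (ν : Measure ℝ) [IsProbabilityMeasure ν] (N : ℕ) {t : ℝ} (ht : 0 ≤ t)
    (hint : Integrable (fun x : ℝ => x ^ (2 * N)) ν) :
    t ^ (2 * N) * (ν (Set.Ici t)).toReal ≤ ∫ x, x ^ (2 * N) ∂ν := by
  have hnonneg : 0 ≤ᵐ[ν] fun x : ℝ => x ^ (2 * N) :=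
    Filter.Eventually.of_forall fun x => Even.pow_nonneg (even_two_mul N) x
  have hmono : ν (Set.Ici t) ≤ ν {x : ℝ | t ^ (2 * N) ≤ x ^ (2 * N)} :=
    measure_mono fun x hx => pow_le_pow_left₀ ht hx _
  calc t ^ (2 * N) * (ν (Set.Ici t)).toReal
      ≤ t ^ (2 * N) * (ν {x : ℝ | t ^ (2 * N) ≤ x ^ (2 * N)}).toReal := by
        apply mul_le_mul_of_nonneg_left _ (pow_nonneg ht _)
        exact ENNReal.toReal_mono (measure_ne_top _ _) hmono
    _ ≤ _ := mul_meas_ge_le_integral_of_nonneg hnonneg hint _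

lemma aux_key_upper (β c d ε t : ℝ) (oN : ℝ) (hβ : 0 < β)
    (hε : 0 < ε) (hε2 : ε ≤ β ^ 2 / 8)
    (hd : d ≤ Real.exp (-1 - 2 * c / β ^ 2) * (β ^ 2 / 2 - 2 * ε))
    (ht : 1 ≤ t) (N : ℕ)
    (hA1 : Real.exp (-1 - 2 * c / β ^ 2) * t ^ ((4 : ℝ) / β ^ 2) ≤ N)
    (hA2 : (N : ℝ) ≤ Real.exp (-1 - 2 * c / β ^ 2) * t ^ ((4 : ℝ) / β ^ 2) + 1)
    (hA3 : β ^ 2 / (2 * ε) ≤ Real.exp (-1 - 2 * c / β ^ 2) * t ^ ((4 : ℝ) / β ^ 2))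
    (hoN : oN ≤ ε * N) :
    Real.log N * (β ^ 2 * N / 2) + (c * N + oN) - Real.log t * (2 * N)
      ≤ -(d * t ^ ((4 : ℝ) / β ^ 2)) := by
  have hβ2 : (0:ℝ) < β ^ 2 := by positivity
  have ht0 : (0:ℝ) < t := lt_of_lt_of_le one_pos ht
  set γ : ℝ := (4 : ℝ) / β ^ 2 with hγ
  set E : ℝ := Real.exp (-1 - 2 * c / β ^ 2) with hE
  have hEpos : 0 < E := Real.exp_pos _
  set A : ℝ := E * t ^ γ with hA
  have hApos : 0 < A := by positivity
  have hA4 : (4:ℝ) ≤ A := by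
    have h1 : β ^ 2 / (2 * ε) ≥ 4 := by
      rw [ge_iff_le, le_div_iff₀ (by positivity)]
      linarith
    linarith
  have hNpos : (0:ℝ) < N := lt_of_lt_of_le hApos hA1
  -- log N ≤ log A + 1/A
  have hlogN : Real.log N ≤ Real.log A + 1 / A := by
    have h1 : Real.log N ≤ Real.log (A + 1) := Real.log_le_log hNpos hA2
    have h2 : Real.log (A + 1) = Real.log A + Real.log (1 + 1 / A) := by
      rw [← Real.log_mul (ne_of_gt hApos) (by positivity)]
      congr 1
      field_simp
    have h3 : Real.log (1 + 1 / A) ≤ 1 / A := by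
      have := Real.log_le_sub_one_of_pos (show (0:ℝ) < 1 + 1/A by positivity)
      linarith
    linarith
  have hlogA : Real.log A = (-1 - 2 * c / β ^ 2) + γ * Real.log t := by
    rw [hA, hE, Real.log_mul (Real.exp_ne_zero _) (by positivity), Real.log_exp,
      Real.log_rpow ht0]
  -- multiply by β²N/2
  have step1 : Real.log N * (β ^ 2 * N / 2)
      ≤ ((-1 - 2 * c / β ^ 2) + γ * Real.log t + 1 / A) * (β ^ 2 * N / 2) := by
    apply mul_le_mul_of_nonneg_right _ (by positivity)
    rw [hlogA] at hlogN; linarith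
  have e1 : ((-1 - 2 * c / β ^ 2) + γ * Real.log t + 1 / A) * (β ^ 2 * N / 2)
      = -(β ^ 2 * N / 2) - c * N + Real.log t * (2 * N) + β ^ 2 * N / (2 * A) := by
    rw [hγ]; field_simp; ring
  have e5 : β ^ 2 * N / (2 * A) ≤ ε * N := by
    have h1 : β ^ 2 / (2 * A) ≤ ε := by
      rw [div_le_iff₀ (by positivity)]
      rw [div_le_iff₀ (by positivity)] at hA3
      nlinarith
    calc β ^ 2 * N / (2 * A) = (β ^ 2 / (2 * A)) * N := by ring
      _ ≤ ε * N := mul_le_mul_of_nonneg_right h1 hNpos.le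
  -- main combination
  have main1 : Real.log N * (β ^ 2 * N / 2) + (c * N + oN) - Real.log t * (2 * N)
      ≤ -((β ^ 2 / 2 - 2 * ε) * N) := by
    rw [e1] at step1
    nlinarith
  have hcoef : (0:ℝ) < β ^ 2 / 2 - 2 * ε := by nlinarith
  have main2 : -((β ^ 2 / 2 - 2 * ε) * (N:ℝ)) ≤ -((β ^ 2 / 2 - 2 * ε) * A) := by
    have := mul_le_mul_of_nonneg_left hA1 hcoef.le
    linarith
  have main3 : -((β ^ 2 / 2 - 2 * ε) * A) ≤ -(d * t ^ γ) := by
    have h1 : d * t ^ γ ≤ (E * (β ^ 2 / 2 - 2 * ε)) * t ^ γ :=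
      mul_le_mul_of_nonneg_right hd (Real.rpow_nonneg ht0.le _)
    have h2 : (β ^ 2 / 2 - 2 * ε) * A = (E * (β ^ 2 / 2 - 2 * ε)) * t ^ γ := by
      rw [hA]; ring
    linarith
  linarith
lemma aux_tail_ne_zero (β : ℝ) (hβ : 0 < β) (ν : Measure ℝ) [IsProbabilityMeasure ν]
    (hsupp : ν (Set.Iio 0) = 0) (css : ℝ) (o : ℕ → ℝ)
    (ho : Tendsto (fun N : ℕ => o N / N) atTop (nhds 0))
    (hmom : ∀ N : ℕ, 1 ≤ N →
      ∫ x, x ^ (2 * N) ∂ν = (N : ℝ) ^ (β ^ 2 * (N : ℝ) / 2) * Real.exp (css * N + o N))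
    (t : ℝ) : ν (Set.Ici t) ≠ 0 := by
  intro h0
  set T := max t 1 with hT
  have hT1 : (1:ℝ) ≤ T := le_max_right _ _
  have hT0 : (0:ℝ) < T := lt_of_lt_of_le one_pos hT1
  have hae : ∀ᵐ x ∂ν, 0 ≤ x ∧ x < t := by
    have h1 : ∀ᵐ x ∂ν, x ∉ Set.Iio 0 := measure_eq_zero_iff_ae_notMem.mp hsupp
    have h2 : ∀ᵐ x ∂ν, x ∉ Set.Ici t := measure_eq_zero_iff_ae_notMem.mp h0
    filter_upwards [h1, h2] with x hx1 hx2
    exact ⟨not_lt.mp hx1, not_le.mp hx2⟩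
  have key : ∀ N : ℕ, 1 ≤ N →
      Real.log (N : ℝ) * (β ^ 2 * N / 2) + (css * N + o N) ≤ Real.log T * (2 * N) := by
    intro N hN
    have hNR : (0:ℝ) < N := by exact_mod_cast hN
    have hint : Integrable (fun x : ℝ => x ^ (2 * N)) ν := by
      apply aux_integrable_of_ne_zero
      rw [hmom N hN]
      exact (mul_pos (Real.rpow_pos_of_pos hNR _) (Real.exp_pos _)).ne'
    have hle : (N : ℝ) ^ (β ^ 2 * (N : ℝ) / 2) * Real.exp (css * N + o N) ≤ T ^ (2 * N) := by
      rw [← hmom N hN]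
      calc ∫ x, x ^ (2 * N) ∂ν ≤ ∫ _x, T ^ (2 * N) ∂ν := by
            apply integral_mono_ae hint (integrable_const _)
            filter_upwards [hae] with x hx
            exact pow_le_pow_left₀ hx.1 (le_trans hx.2.le (le_max_left t 1)) _
        _ = T ^ (2 * N) := by simp
    have := Real.log_le_log (mul_pos (Real.rpow_pos_of_pos hNR _) (Real.exp_pos _)) hle
    rw [Real.log_mul (Real.rpow_pos_of_pos hNR _).ne' (Real.exp_ne_zero _),
      Real.log_rpow hNR, Real.log_exp, Real.log_pow] at this
    push_cast at this ⊢
    nlinarith [this]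
  -- contradiction for large N
  have l1 : Tendsto (fun N : ℕ => Real.log (N : ℝ)) atTop atTop :=
    Real.tendsto_log_atTop.comp tendsto_natCast_atTop_atTop
  have l2 : Tendsto (fun N : ℕ => β ^ 2 / 2 * Real.log (N : ℝ) + css) atTop atTop :=
    tendsto_atTop_add_const_right _ css (l1.const_mul_atTop (by positivity))
  have l3 : Tendsto (fun N : ℕ => β ^ 2 / 2 * Real.log (N : ℝ) + css + o N / N) atTop atTop := by
    apply tendsto_atTop_add_right_of_le' _ (-1 : ℝ) l2
    filter_upwards [ho.eventually (eventually_ge_nhds (by norm_num : (-1:ℝ) < 0))] with N hN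
    exact hN
  obtain ⟨N, hN1, hNgt⟩ :
      ∃ N : ℕ, 1 ≤ N ∧ 2 * Real.log T < β ^ 2 / 2 * Real.log (N : ℝ) + css + o N / N := by
    have := (eventually_ge_atTop 1).and (l3.eventually_gt_atTop (2 * Real.log T))
    obtain ⟨N, hN⟩ := this.exists
    exact ⟨N, hN.1, hN.2⟩
  have hNR : (0:ℝ) < N := by exact_mod_cast hN1
  have hkey := key N hN1
  have hmulN : (2 * Real.log T) * N < (β ^ 2 / 2 * Real.log (N : ℝ) + css + o N / N) * N :=
    mul_lt_mul_of_pos_right hNgt hNR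
  have hoN : o N / N * N = o N := div_mul_cancel₀ _ hNR.ne'
  nlinarith [hkey, hmulN, hoN]

lemma aux_tail_lower (ν : Measure ℝ) [IsProbabilityMeasure ν] (hsupp : ν (Set.Iio 0) = 0)
    (N : ℕ) (t T : ℝ) (ht0 : 0 < t) (htT : t ≤ T) (hT1 : 1 ≤ T)
    (hint2 : Integrable (fun x : ℝ => x ^ (2 * N)) ν)
    (hint4 : Integrable (fun x : ℝ => x ^ (2 * (2 * N))) ν) :
    ∫ x, x ^ (2 * N) ∂ν ≤
      t ^ (2 * N) + T ^ (2 * N) * (ν (Set.Ici t)).toReal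
        + (∫ x, x ^ (2 * (2 * N)) ∂ν) / T ^ (2 * N) := by
  have hT0 : (0:ℝ) < T := lt_of_lt_of_le one_pos hT1
  have hTpow : (0:ℝ) < T ^ (2 * N) := pow_pos hT0 _
  have hsplit1 : ∫ x, x ^ (2 * N) ∂ν
      = (∫ x in Set.Iio t, x ^ (2 * N) ∂ν) + ∫ x in Set.Ici t, x ^ (2 * N) ∂ν := by
    rw [← integral_add_compl measurableSet_Iio hint2, Set.compl_Iio]
  have hdisj : Disjoint (Set.Ico t T) (Set.Ici T) := by
    rw [Set.disjoint_left]
    exact fun x hx hx' => absurd hx' (not_le.mpr hx.2)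
  have hsplit2 : ∫ x in Set.Ici t, x ^ (2 * N) ∂ν
      = (∫ x in Set.Ico t T, x ^ (2 * N) ∂ν) + ∫ x in Set.Ici T, x ^ (2 * N) ∂ν := by
    rw [← setIntegral_union hdisj measurableSet_Ici hint2.integrableOn hint2.integrableOn,
      Set.Ico_union_Ici_eq_Ici htT]
  have B1 : ∫ x in Set.Iio t, x ^ (2 * N) ∂ν ≤ t ^ (2 * N) := by
    have hb : ∀ᵐ x ∂(ν.restrict (Set.Iio t)), x ^ (2 * N) ≤ t ^ (2 * N) := by
      rw [ae_restrict_iff' measurableSet_Iio]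
      filter_upwards [measure_eq_zero_iff_ae_notMem.mp hsupp] with x hx0 hxt
      exact pow_le_pow_left₀ (not_lt.mp hx0) hxt.le _
    calc ∫ x in Set.Iio t, x ^ (2 * N) ∂ν ≤ ∫ _x in Set.Iio t, t ^ (2 * N) ∂ν :=
          integral_mono_ae hint2.restrict (integrable_const _) hb
      _ = (ν (Set.Iio t)).toReal * t ^ (2 * N) := by
          rw [integral_const, measureReal_restrict_apply_univ, smul_eq_mul, measureReal_def]
      _ ≤ 1 * t ^ (2 * N) := by
          apply mul_le_mul_of_nonneg_right _ (pow_nonneg ht0.le _)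
          exact ENNReal.toReal_le_of_le_ofReal one_pos.le (by simpa using prob_le_one)
      _ = t ^ (2 * N) := one_mul _
  have B2 : ∫ x in Set.Ico t T, x ^ (2 * N) ∂ν ≤ T ^ (2 * N) * (ν (Set.Ici t)).toReal := by
    have hb : ∀ᵐ x ∂(ν.restrict (Set.Ico t T)), x ^ (2 * N) ≤ T ^ (2 * N) := by
      rw [ae_restrict_iff' measurableSet_Ico]
      apply Filter.Eventually.of_forall
      intro x hx
      exact pow_le_pow_left₀ (le_trans ht0.le hx.1) hx.2.le _
    calc ∫ x in Set.Ico t T, x ^ (2 * N) ∂ν ≤ ∫ _x in Set.Ico t T, T ^ (2 * N) ∂ν :=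
          integral_mono_ae hint2.restrict (integrable_const _) hb
      _ = (ν (Set.Ico t T)).toReal * T ^ (2 * N) := by
          rw [integral_const, measureReal_restrict_apply_univ, smul_eq_mul, measureReal_def]
      _ ≤ (ν (Set.Ici t)).toReal * T ^ (2 * N) := by
          apply mul_le_mul_of_nonneg_right _ (pow_nonneg hT0.le _)
          exact ENNReal.toReal_mono (measure_ne_top _ _)
            (measure_mono Set.Ico_subset_Ici_self)
      _ = T ^ (2 * N) * (ν (Set.Ici t)).toReal := mul_comm _ _
  have B3 : ∫ x in Set.Ici T, x ^ (2 * N) ∂ν ≤ (∫ x, x ^ (2 * (2 * N)) ∂ν) / T ^ (2 * N) := by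
    have hstep : ∫ x in Set.Ici T, x ^ (2 * N) ∂ν
        ≤ ∫ x in Set.Ici T, x ^ (2 * (2 * N)) / T ^ (2 * N) ∂ν := by
      apply setIntegral_mono_on hint2.restrict (hint4.div_const _).restrict
        measurableSet_Ici
      intro x hx
      have hx0 : (0:ℝ) ≤ x := le_trans hT0.le hx
      rw [le_div_iff₀ hTpow]
      have h1 : T ^ (2 * N) ≤ x ^ (2 * N) := pow_le_pow_left₀ hT0.le hx _
      calc x ^ (2 * N) * T ^ (2 * N) ≤ x ^ (2 * N) * x ^ (2 * N) :=
            mul_le_mul_of_nonneg_left h1 (pow_nonneg hx0 _)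
        _ = x ^ (2 * (2 * N)) := by ring
    have hstep2 : ∫ x in Set.Ici T, x ^ (2 * (2 * N)) / T ^ (2 * N) ∂ν
        = (∫ x in Set.Ici T, x ^ (2 * (2 * N)) ∂ν) / T ^ (2 * N) := integral_div _ _
    have hstep3 : ∫ x in Set.Ici T, x ^ (2 * (2 * N)) ∂ν ≤ ∫ x, x ^ (2 * (2 * N)) ∂ν :=
      setIntegral_le_integral hint4
        (Filter.Eventually.of_forall fun x => Even.pow_nonneg (even_two_mul _) x)
    rw [hstep2] at hstep
    exact hstep.trans (div_le_div_of_nonneg_right hstep3 hTpow.le)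
  linarith [hsplit1, hsplit2, B1, B2, B3]
lemma aux_cobounded (β : ℝ) (hβ : 0 < β) (ν : Measure ℝ) [IsProbabilityMeasure ν]
    (hsupp : ν (Set.Iio 0) = 0) (css : ℝ) (o : ℕ → ℝ)
    (ho : Tendsto (fun N : ℕ => o N / N) atTop (nhds 0))
    (hmom : ∀ N : ℕ, 1 ≤ N →
      ∫ x, x ^ (2 * N) ∂ν = (N : ℝ) ^ (β ^ 2 * (N : ℝ) / 2) * Real.exp (css * N + o N)) :
    IsCoboundedUnder (· ≤ ·) atTop
      (fun t : ℝ => Real.log (ν (Set.Ici t)).toReal / t ^ ((4 : ℝ) / β ^ 2)) := by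
  have hβ2 : (0:ℝ) < β ^ 2 := by positivity
  have hlog2 : (0:ℝ) < Real.log 2 := Real.log_pos one_lt_two
  have hlog4 : (0:ℝ) ≤ Real.log 4 := Real.log_nonneg (by norm_num)
  set C₁ : ℝ := β ^ 2 * Real.log 2 + 1 with hC₁
  have hC₁pos : 0 < C₁ := by positivity
  set e₀ : ℝ := Real.exp (2 * css / β ^ 2 - 1) with he₀
  have he₀pos : 0 < e₀ := Real.exp_pos _
  apply IsCoboundedUnder.of_frequently_ge (a := -(C₁ / e₀))
  rw [frequently_atTop]
  intro b
  -- ratio limits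
  have h2o : Tendsto (fun N : ℕ => o (2 * N) / N) atTop (nhds 0) := by
    have h1 : Tendsto (fun N : ℕ => o (2 * N) / ((2 * N : ℕ) : ℝ)) atTop (nhds 0) :=
      ho.comp (Filter.tendsto_atTop_atTop.mpr fun B => ⟨B, fun a ha => by omega⟩)
    have h2 := h1.const_mul (2 : ℝ)
    rw [mul_zero] at h2
    apply h2.congr'
    filter_upwards [eventually_ge_atTop 1] with N hN
    have : ((N : ℝ)) ≠ 0 := by positivity
    push_cast
    field_simp
  have hrec : Tendsto (fun N : ℕ => 1 / (N : ℝ)) atTop (nhds 0) :=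
    tendsto_one_div_atTop_nhds_zero_nat
  have hlogN : Tendsto (fun N : ℕ => Real.log (N : ℝ)) atTop atTop :=
    Real.tendsto_log_atTop.comp tendsto_natCast_atTop_atTop
  -- eventual conditions
  have A2 : ∀ᶠ N : ℕ in atTop,
      0 ≤ 2 * Real.log 4 + β ^ 2 * N * Real.log 2 + (o (2 * N) - 2 * o N) := by
    have l : Tendsto (fun N : ℕ => β ^ 2 * Real.log 2 + (o (2 * N) / N - 2 * (o N / N)))
        atTop (nhds (β ^ 2 * Real.log 2)) := by
      have := (h2o.sub (ho.const_mul (2:ℝ))).const_add (β ^ 2 * Real.log 2)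
      simpa using this
    filter_upwards [l.eventually (eventually_gt_nhds (by positivity)), eventually_ge_atTop 1]
      with N hl hN
    have hN0 : (0:ℝ) < N := by exact_mod_cast hN
    have d1 : o (2 * N) / N * N = o (2 * N) := div_mul_cancel₀ _ hN0.ne'
    have d2 : o N / N * N = o N := div_mul_cancel₀ _ hN0.ne'
    nlinarith [mul_pos hl hN0, d1, d2, hlog4]
  have A3 : ∀ᶠ N : ℕ in atTop,
      0 ≤ Real.log 4 + Real.log N * (β ^ 2 * N / 2) + β ^ 2 * N * Real.log 2
        + css * N + (o (2 * N) - o N) := by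
    have l : Tendsto (fun N : ℕ => Real.log 4 / N + (β ^ 2 / 2) * Real.log N
        + β ^ 2 * Real.log 2 + css + (o (2 * N) / N - o N / N)) atTop atTop := by
      apply tendsto_atTop_add_right_of_le' _ (-1 : ℝ)
      · apply tendsto_atTop_add_const_right
        apply tendsto_atTop_add_const_right
        apply tendsto_atTop_add_left_of_le' _ (-1 : ℝ)
        · have h := hrec.const_mul (Real.log 4)
          rw [mul_zero] at h
          filter_upwards [h.eventually (eventually_ge_nhds (by norm_num : (-1:ℝ) < 0))] with N hN
          calc (-1:ℝ) ≤ Real.log 4 * (1 / N) := hN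
            _ = Real.log 4 / N := by rw [mul_one_div]
        · exact hlogN.const_mul_atTop (by positivity)
      · have h := h2o.sub ho
        rw [sub_zero] at h
        filter_upwards [h.eventually (eventually_ge_nhds (by norm_num : (-1:ℝ) < 0))] with N hN
        simpa using hN
    filter_upwards [l.eventually_ge_atTop 0, eventually_ge_atTop 1] with N hl hN
    have hN0 : (0:ℝ) < N := by exact_mod_cast hN
    have hmul := mul_le_mul_of_nonneg_right hl hN0.le
    rw [zero_mul] at hmul
    have e1 : (Real.log 4 / N + (β ^ 2 / 2) * Real.log N + β ^ 2 * Real.log 2 + css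
        + (o (2 * N) / N - o N / N)) * N
        = Real.log 4 + Real.log N * (β ^ 2 * N / 2) + β ^ 2 * N * Real.log 2
          + css * N + (o (2 * N) - o N) := by
      field_simp
      try ring
    rw [e1] at hmul
    linarith
  have A4 : ∀ᶠ N : ℕ in atTop, -(N : ℝ) ≤ 2 * o N - o (2 * N) - Real.log 8 := by
    have l : Tendsto (fun N : ℕ => 1 + (2 * (o N / N) - o (2 * N) / N - Real.log 8 * (1 / N)))
        atTop (nhds 1) := by
      have := tendsto_const_nhds (x := (1:ℝ)) (f := atTop (α := ℕ)) |>.add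
        (((ho.const_mul (2:ℝ)).sub h2o).sub (hrec.const_mul (Real.log 8)))
      simpa using this
    filter_upwards [l.eventually (eventually_gt_nhds (by norm_num : (0:ℝ) < 1)),
      eventually_ge_atTop 1] with N hl hN
    have hN0 : (0:ℝ) < N := by exact_mod_cast hN
    have hmul := mul_pos hl hN0
    have e1 : (1 + (2 * (o N / N) - o (2 * N) / N - Real.log 8 * (1 / N))) * N
        = N + (2 * o N - o (2 * N) - Real.log 8) := by
      field_simp
      try ring
    rw [e1] at hmul
    linarith
  have A5 : ∀ᶠ N : ℕ in atTop, (-1 : ℝ) ≤ 2 / β ^ 2 * ((o N - Real.log 4) / N) := by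
    have l : Tendsto (fun N : ℕ => 2 / β ^ 2 * ((o N - Real.log 4) / N)) atTop (nhds 0) := by
      have h1 : Tendsto (fun N : ℕ => o N / N - Real.log 4 * (1 / N)) atTop (nhds 0) := by
        have := ho.sub (hrec.const_mul (Real.log 4))
        simpa using this
      have h2 := h1.const_mul (2 / β ^ 2)
      rw [mul_zero] at h2
      apply h2.congr
      intro N
      rw [sub_div, mul_one_div]
      try ring
    exact l.eventually (eventually_ge_nhds (by norm_num : (-1:ℝ) < 0))
  have A6 : ∀ᶠ N : ℕ in atTop,
      b ≤ Real.exp ((Real.log N * (β ^ 2 * N / 2) + (css * N + o N) - Real.log 4) / (2 * N)) := by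
    have l : Tendsto (fun N : ℕ =>
        (Real.log N * (β ^ 2 * N / 2) + (css * N + o N) - Real.log 4) / (2 * N)) atTop atTop := by
      have l0 : Tendsto (fun N : ℕ => (β ^ 2 / 4) * Real.log N + css / 2
          + (1 / 2) * (o N / N) - (Real.log 4 / 2) * (1 / N)) atTop atTop := by
        apply tendsto_atTop_add_right_of_le' _ (-1 : ℝ)
        · apply tendsto_atTop_add_right_of_le' _ (-1 : ℝ)
          · exact tendsto_atTop_add_const_right _ _ (hlogN.const_mul_atTop (by positivity))
          · have h := ho.const_mul (1/2 : ℝ)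
            rw [mul_zero] at h
            filter_upwards [h.eventually (eventually_ge_nhds (by norm_num : (-1:ℝ) < 0))] with N hN
            simpa [mul_comm] using hN
        · have h := hrec.const_mul (Real.log 4 / 2)
          rw [mul_zero] at h
          filter_upwards [h.eventually (eventually_le_nhds (by norm_num : (0:ℝ) < 1))] with N hN
          linarith [hN]
      apply l0.congr'
      filter_upwards [eventually_ge_atTop 1] with N hN
      have hN0 : (0:ℝ) < N := by exact_mod_cast hN
      field_simp
      ring
    exact ((Real.tendsto_exp_atTop.comp l).eventually_ge_atTop b)
  -- pick N
  obtain ⟨N, ⟨⟨⟨⟨⟨hN1, hA2⟩, hA3⟩, hA4⟩, hA5⟩, hA6⟩⟩ :=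
    ((((((eventually_ge_atTop 1).and A2).and A3).and A4).and A5).and A6).exists
  -- fixed N
  have hNR : (0:ℝ) < N := by exact_mod_cast hN1
  have hNne : ((N:ℝ)) ≠ 0 := hNR.ne'
  have h2N1 : 1 ≤ 2 * N := by omega
  have h2NR : (0:ℝ) < 2 * (N:ℝ) := by positivity
  set M2 : ℝ := ∫ x, x ^ (2 * N) ∂ν with hM2def
  set M4 : ℝ := ∫ x, x ^ (2 * (2 * N)) ∂ν with hM4def
  have hM2 : M2 = (N:ℝ) ^ (β ^ 2 * (N:ℝ) / 2) * Real.exp (css * N + o N) := hmom N hN1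
  have hM4 : M4 = (2 * (N:ℝ)) ^ (β ^ 2 * (2 * (N:ℝ)) / 2) * Real.exp (css * (2 * (N:ℝ)) + o (2 * N)) := by
    have h := hmom (2 * N) h2N1
    rw [← hM4def] at h
    push_cast at h
    exact h
  have hM2pos : 0 < M2 := by
    rw [hM2]; exact mul_pos (Real.rpow_pos_of_pos hNR _) (Real.exp_pos _)
  have hM4pos : 0 < M4 := by
    rw [hM4]; exact mul_pos (Real.rpow_pos_of_pos h2NR _) (Real.exp_pos _)
  have hlogM2 : Real.log M2 = β ^ 2 * (N:ℝ) / 2 * Real.log N + (css * N + o N) := by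
    rw [hM2, Real.log_mul (Real.rpow_pos_of_pos hNR _).ne' (Real.exp_ne_zero _),
      Real.log_rpow hNR, Real.log_exp]
  have hlogM4 : Real.log M4
      = β ^ 2 * (2 * (N:ℝ)) / 2 * Real.log (2 * (N:ℝ)) + (css * (2 * (N:ℝ)) + o (2 * N)) := by
    rw [hM4, Real.log_mul (Real.rpow_pos_of_pos h2NR _).ne' (Real.exp_ne_zero _),
      Real.log_rpow h2NR, Real.log_exp]
  have hlog2N : Real.log (2 * (N:ℝ)) = Real.log 2 + Real.log N :=
    Real.log_mul two_ne_zero hNne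
  set sN : ℝ := (Real.log M2 - Real.log 4) / (2 * (N:ℝ)) with hsN
  set τN : ℝ := (Real.log 4 + Real.log M4 - Real.log M2) / (2 * (N:ℝ)) with hτN
  set t : ℝ := Real.exp sN with htdef
  set T : ℝ := Real.exp τN with hTdef
  have ht0 : 0 < t := Real.exp_pos _
  have ht2N : t ^ (2 * N) = M2 / 4 := by
    rw [htdef, ← Real.exp_nat_mul]
    rw [show ((2 * N : ℕ) : ℝ) * sN = Real.log (M2 / 4) by
      rw [Real.log_div hM2pos.ne' (by norm_num), hsN]
      push_cast
      field_simp]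
    exact Real.exp_log (by positivity)
  have hT2N : T ^ (2 * N) = 4 * M4 / M2 := by
    rw [hTdef, ← Real.exp_nat_mul]
    rw [show ((2 * N : ℕ) : ℝ) * τN = Real.log (4 * M4 / M2) by
      rw [Real.log_div (by positivity) hM2pos.ne', Real.log_mul (by norm_num) hM4pos.ne', hτN]
      push_cast
      field_simp]
    exact Real.exp_log (by positivity)
  have htT : t ≤ T := by
    rw [htdef, hTdef]
    apply Real.exp_le_exp.mpr
    rw [hsN, hτN, div_le_div_iff_of_pos_right h2NR, hlogM2, hlogM4, hlog2N]
    nlinarith [hA2]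
  have hT1 : (1:ℝ) ≤ T := by
    rw [hTdef]
    apply Real.one_le_exp
    apply div_nonneg _ h2NR.le
    rw [hlogM2, hlogM4, hlog2N]
    nlinarith [hA3]
  have hint2 : Integrable (fun x : ℝ => x ^ (2 * N)) ν := by
    apply aux_integrable_of_ne_zero
    rw [← hM2def]; exact hM2pos.ne'
  have hint4 : Integrable (fun x : ℝ => x ^ (2 * (2 * N))) ν := by
    apply aux_integrable_of_ne_zero
    rw [← hM4def]; exact hM4pos.ne'
  have hlow := aux_tail_lower ν hsupp N t T ht0 htT hT1 hint2 hint4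
  rw [← hM2def, ← hM4def, ht2N, hT2N] at hlow
  have hq : M4 / (4 * M4 / M2) = M2 / 4 := by
    field_simp
    try ring
  rw [hq] at hlow
  set R : ℝ := (ν (Set.Ici t)).toReal with hRdef
  have hν : M2 ^ 2 / (8 * M4) ≤ R := by
    have hk : M2 / 2 ≤ 4 * M4 / M2 * R := by linarith only [hlow]
    have hk2 := mul_le_mul_of_nonneg_right hk hM2pos.le
    have he2 : 4 * M4 / M2 * R * M2 = 4 * M4 * R := by
      field_simp
    rw [he2] at hk2
    rw [div_le_iff₀ (by positivity : (0:ℝ) < 8 * M4)]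
    nlinarith [hk2]
  have hRpos : 0 < R := lt_of_lt_of_le (by positivity) hν
  have hlogR : -(C₁ * N) ≤ Real.log R := by
    have h0 : -(C₁ * (N:ℝ)) ≤ Real.log (M2 ^ 2 / (8 * M4)) := by
      rw [Real.log_div (by positivity) (by positivity : (0:ℝ) < 8 * M4).ne',
        Real.log_pow, Real.log_mul (by norm_num : (8:ℝ) ≠ 0) hM4pos.ne',
        hlogM2, hlogM4, hlog2N, hC₁]
      have h8 : Real.log 8 = Real.log 8 := rfl
      push_cast
      nlinarith [hA4]
    exact h0.trans (Real.log_le_log (by positivity) hν)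
  have htγ : e₀ * N ≤ t ^ ((4:ℝ) / β ^ 2) := by
    have h1 : t ^ ((4:ℝ) / β ^ 2) = Real.exp (sN * ((4:ℝ) / β ^ 2)) := by
      rw [htdef, ← Real.exp_log (Real.exp_pos sN), Real.log_exp,
        Real.rpow_def_of_pos (Real.exp_pos _), Real.log_exp]
    have h2 : e₀ * N = Real.exp (2 * css / β ^ 2 - 1 + Real.log N) := by
      rw [Real.exp_add, he₀, Real.exp_log hNR]
    rw [h1, h2]
    apply Real.exp_le_exp.mpr
    have heq : sN * ((4:ℝ) / β ^ 2)
        = Real.log N + 2 * css / β ^ 2 + 2 / β ^ 2 * ((o N - Real.log 4) / N) := by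
      rw [hsN, hlogM2]
      field_simp
      ring
    rw [heq]
    linarith [hA5]
  refine ⟨t, ?_, ?_⟩
  · have hteq : t = Real.exp ((Real.log N * (β ^ 2 * N / 2) + (css * N + o N) - Real.log 4)
        / (2 * (N:ℝ))) := by
      rw [htdef]
      congr 1
      rw [hsN, hlogM2]
      ring
    rw [hteq]
    exact hA6
  · show -(C₁ / e₀) ≤ Real.log (ν (Set.Ici t)).toReal / t ^ ((4:ℝ) / β ^ 2)
    have htγpos : 0 < t ^ ((4:ℝ) / β ^ 2) := Real.rpow_pos_of_pos ht0 _
    rw [← hRdef, le_div_iff₀ htγpos]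
    have h3 : C₁ / e₀ * (e₀ * N) = C₁ * N := by
      field_simp
    have h4 := mul_le_mul_of_nonneg_left htγ (le_of_lt (div_pos hC₁pos he₀pos))
    rw [h3] at h4
    calc -(C₁ / e₀) * t ^ ((4:ℝ) / β ^ 2) = -(C₁ / e₀ * t ^ ((4:ℝ) / β ^ 2)) := by ring
      _ ≤ -(C₁ * N) := neg_le_neg h4
      _ ≤ Real.log R := hlogR


/-- Tail upper bound from moment asymptotics: if
`∫ x^{2N} dν = N^{β²N/2} e^{c** N + o(N)}`, then for every `d* < c*` the tail
`ν[t,∞)` is at most `e^{-d* t^{4/β²}}` for large `t`; in particular the normalized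
log-tail has limsup at most `-c*`, where `c* = (β²/2) e^{-1-2c**/β²}`. -/
theorem tail_upper_bound_from_moments (β : ℝ) (hβ : β ∈ Set.Ioo 0 (Real.sqrt 2))
    (ν : Measure ℝ) [IsProbabilityMeasure ν] (hsupp : ν (Set.Iio 0) = 0)
    (css : ℝ) (o : ℕ → ℝ)
    (ho : Tendsto (fun N : ℕ => o N / N) atTop (nhds 0))
    (hmom : ∀ N : ℕ, 1 ≤ N →
      ∫ x, x ^ (2 * N) ∂ν = (N : ℝ) ^ (β ^ 2 * (N : ℝ) / 2) * Real.exp (css * N + o N)) :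
    (∀ d : ℝ, d < β ^ 2 / 2 * Real.exp (-1 - 2 * css / β ^ 2) →
      ∃ t₀ : ℝ, ∀ t : ℝ, t₀ ≤ t →
        (ν (Set.Ici t)).toReal ≤ Real.exp (-(d * t ^ ((4 : ℝ) / β ^ 2)))) ∧
    limsup (fun t : ℝ => Real.log (ν (Set.Ici t)).toReal / t ^ ((4 : ℝ) / β ^ 2)) atTop ≤
      -(β ^ 2 / 2 * Real.exp (-1 - 2 * css / β ^ 2)) := by
  obtain ⟨hβ0, hβs⟩ := hβ
  have hβ2 : (0:ℝ) < β ^ 2 := by positivity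
  have part1 : ∀ d : ℝ, d < β ^ 2 / 2 * Real.exp (-1 - 2 * css / β ^ 2) →
      ∃ t₀ : ℝ, ∀ t : ℝ, t₀ ≤ t →
        (ν (Set.Ici t)).toReal ≤ Real.exp (-(d * t ^ ((4 : ℝ) / β ^ 2))) := by
    intro d hd
    have hEpos : 0 < Real.exp (-1 - 2 * css / β ^ 2) := Real.exp_pos _
    set E := Real.exp (-1 - 2 * css / β ^ 2) with hE
    set ε : ℝ := min (β ^ 2 / 8) ((β ^ 2 / 2 * E - d) / (2 * E)) with hε
    have hεpos : 0 < ε := lt_min (by positivity) (div_pos (by linarith) (by positivity))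
    have hε8 : ε ≤ β ^ 2 / 8 := min_le_left _ _
    have hd' : d ≤ E * (β ^ 2 / 2 - 2 * ε) := by
      have h1 : ε ≤ (β ^ 2 / 2 * E - d) / (2 * E) := min_le_right _ _
      rw [le_div_iff₀ (by positivity)] at h1
      nlinarith
    obtain ⟨N₀, hN₀⟩ := Metric.tendsto_atTop.mp ho ε hεpos
    have hAtend : Tendsto (fun t : ℝ => E * t ^ ((4:ℝ) / β ^ 2)) atTop atTop :=
      (tendsto_rpow_atTop (by positivity)).const_mul_atTop hEpos
    have hev : ∀ᶠ t : ℝ in atTop,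
        1 ≤ t ∧ max (max (N₀:ℝ) (β ^ 2 / (2 * ε))) 1 ≤ E * t ^ ((4:ℝ) / β ^ 2) :=
      (eventually_ge_atTop 1).and (hAtend.eventually_ge_atTop _)
    obtain ⟨t₀, ht₀⟩ := eventually_atTop.mp hev
    refine ⟨t₀, fun t ht => ?_⟩
    obtain ⟨ht1, htA⟩ := ht₀ t ht
    have ht0 : (0:ℝ) < t := lt_of_lt_of_le one_pos ht1
    have hApos : 0 < E * t ^ ((4:ℝ) / β ^ 2) := by positivity
    set N : ℕ := ⌈E * t ^ ((4:ℝ) / β ^ 2)⌉₊ with hN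
    have hNA : E * t ^ ((4:ℝ) / β ^ 2) ≤ N := Nat.le_ceil _
    have hNA2 : (N:ℝ) ≤ E * t ^ ((4:ℝ) / β ^ 2) + 1 := (Nat.ceil_lt_add_one hApos.le).le
    have hN1 : 1 ≤ N := Nat.one_le_ceil_iff.mpr hApos
    have hNR : (0:ℝ) < N := lt_of_lt_of_le hApos hNA
    have hNN₀ : N₀ ≤ N := by
      have h1 : (N₀:ℝ) ≤ (N:ℝ) :=
        le_trans (le_trans (le_trans (le_max_left _ _) (le_max_left _ 1)) htA) hNA
      exact_mod_cast h1
    have hA3 : β ^ 2 / (2 * ε) ≤ E * t ^ ((4:ℝ) / β ^ 2) :=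
      le_trans (le_trans (le_max_right _ _) (le_max_left _ 1)) htA
    have hoN : o N ≤ ε * N := by
      have h := hN₀ N hNN₀
      rw [Real.dist_eq, sub_zero] at h
      have h2 := (abs_le.mp h.le).2
      rw [div_le_iff₀ hNR] at h2
      linarith
    have hM := hmom N hN1
    have hMpos : 0 < ∫ x, x ^ (2 * N) ∂ν := by
      rw [hM]; exact mul_pos (Real.rpow_pos_of_pos hNR _) (Real.exp_pos _)
    have hint : Integrable (fun x : ℝ => x ^ (2 * N)) ν := aux_integrable_of_ne_zero hMpos.ne'
    have hmarkov := aux_markov ν N ht0.le hint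
    have htpow : (0:ℝ) < t ^ (2 * N) := pow_pos ht0 _
    have h1 : (ν (Set.Ici t)).toReal ≤ (∫ x, x ^ (2 * N) ∂ν) / t ^ (2 * N) := by
      rw [le_div_iff₀ htpow]
      linarith [hmarkov]
    have h2 : (∫ x, x ^ (2 * N) ∂ν) / t ^ (2 * N)
        = Real.exp (Real.log N * (β ^ 2 * N / 2) + (css * N + o N) - Real.log t * (2 * N)) := by
      rw [hM, Real.rpow_def_of_pos hNR]
      rw [show (t : ℝ) ^ (2 * N) = Real.exp (Real.log t * (2 * (N:ℝ))) by
        conv_lhs => rw [← Real.exp_log ht0]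
        rw [← Real.exp_nat_mul]
        congr 1
        push_cast
        ring]
      rw [← Real.exp_add, ← Real.exp_sub]
    have hkey := aux_key_upper β css d ε t (o N) hβ0 hεpos hε8 hd' ht1 N hNA hNA2 hA3 hoN
    calc (ν (Set.Ici t)).toReal ≤ (∫ x, x ^ (2 * N) ∂ν) / t ^ (2 * N) := h1
      _ = Real.exp (Real.log N * (β ^ 2 * N / 2) + (css * N + o N) - Real.log t * (2 * N)) := h2
      _ ≤ Real.exp (-(d * t ^ ((4:ℝ) / β ^ 2))) := Real.exp_le_exp.mpr hkey
  refine ⟨part1, ?_⟩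
  have hcob := aux_cobounded β hβ0 ν hsupp css o ho hmom
  have hub : ∀ d : ℝ, d < β ^ 2 / 2 * Real.exp (-1 - 2 * css / β ^ 2) →
      limsup (fun t : ℝ => Real.log (ν (Set.Ici t)).toReal / t ^ ((4 : ℝ) / β ^ 2)) atTop
        ≤ -d := by
    intro d hd
    apply limsup_le_of_le hcob
    obtain ⟨t₀, hpt⟩ := part1 d hd
    filter_upwards [eventually_ge_atTop (max t₀ 1)] with t ht
    have ht₀ : t₀ ≤ t := le_trans (le_max_left _ _) ht
    have ht1 : (1:ℝ) ≤ t := le_trans (le_max_right _ _) ht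
    have ht0 : (0:ℝ) < t := lt_of_lt_of_le one_pos ht1
    have hνpos : 0 < (ν (Set.Ici t)).toReal :=
      ENNReal.toReal_pos (aux_tail_ne_zero β hβ0 ν hsupp css o ho hmom t) (measure_ne_top _ _)
    have hlog := Real.log_le_log hνpos (hpt t ht₀)
    rw [Real.log_exp] at hlog
    have htγ : 0 < t ^ ((4:ℝ) / β ^ 2) := Real.rpow_pos_of_pos ht0 _
    rw [div_le_iff₀ htγ]
    linarith
  apply le_of_forall_gt_imp_ge_of_dense
  intro y hy
  have h1 : -y < β ^ 2 / 2 * Real.exp (-1 - 2 * css / β ^ 2) := by linarith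
  have := hub (-y) h1
  simpa using this
end

section
/- Let β ∈ (0,√2), α = 4/β², and let ν be a probability measure on [0,∞) such that ∫₀^∞ x^{2N} ν(dx) = N^{β²N/2} e^{c**N + o(N)} as N → ∞, for some c** ∈ ℝ. Set c* = (β²/2) e^{−1 − 2c**/β²}. Then lim_{t→∞} t^{−α} log ν([t,∞)) = −c*. -/
/-!
Markov's inequality with the moment `m_K = ∫ x^{2K} dν = K^{pK} e^{cK + o(K)}`, `p = β²/2`, gives
`log ν[R, ∞) ≤ log m_K - 2K log R`. On the scale `Y = R^{2/p}` and at `K = θY` this exponent is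
`θ (p log θ + c) Y + o(Y)`, which is minimal, equal to `-pγY`, exactly at `θ = γ = e^{-1-c/p}`:
this is the upper bound.

For the lower bound take `N = ⌊rγY⌋` with `r > 1`. On the scale `Y` the index `N` is off-optimal,
so comparing with the optimal moment `⌊γY⌋` shows that the part of `m_N` coming from
`x < Y^{p/2}` is exponentially smaller than `m_N`; on the scale `r²Y` the same holds for the part
coming from `x ≥ (r²Y)^{p/2}`. Hence `ν[Y^{p/2}, ∞) ≥ m_N / (2 (r²Y)^{pN})`, whose exponent is
`r² (γ/r) (p log (γ/r) + c) Y + o(Y)`, and this tends to `-pγY` as `r → 1`.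
-/

open MeasureTheory Filter Real Set Topology

section MomentInequalities

variable {ν : Measure ℝ}

lemma setIntegral_Ico_zero_pow_le {R : ℝ} {M N : ℕ} (hMN : M ≤ N)
    (hM : Integrable (fun x : ℝ => x ^ (2 * M)) ν) (hN : Integrable (fun x : ℝ => x ^ (2 * N)) ν) :
    ∫ x in Ico 0 R, x ^ (2 * N) ∂ν ≤ R ^ (2 * (N - M)) * ∫ x, x ^ (2 * M) ∂ν := by
  have hpt : ∀ x ∈ Ico 0 R, x ^ (2 * N) ≤ R ^ (2 * (N - M)) * x ^ (2 * M) := fun x hx => by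
    rw [show 2 * N = 2 * (N - M) + 2 * M by omega, pow_add]
    exact mul_le_mul_of_nonneg_right (pow_le_pow_left₀ hx.1 hx.2.le _)
      ((even_two_mul M).pow_nonneg x)
  calc ∫ x in Ico 0 R, x ^ (2 * N) ∂ν
      ≤ ∫ x in Ico 0 R, R ^ (2 * (N - M)) * x ^ (2 * M) ∂ν :=
        setIntegral_mono_on hN.integrableOn (hM.const_mul _).integrableOn measurableSet_Ico hpt
    _ = R ^ (2 * (N - M)) * ∫ x in Ico 0 R, x ^ (2 * M) ∂ν := integral_const_mul _ _
    _ ≤ R ^ (2 * (N - M)) * ∫ x, x ^ (2 * M) ∂ν :=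
        mul_le_mul_of_nonneg_left
          (setIntegral_le_integral hM (ae_of_all _ fun x => (even_two_mul M).pow_nonneg x))
          ((even_two_mul _).pow_nonneg R)

lemma pow_mul_setIntegral_Ici_pow_le {R : ℝ} (hR : 0 ≤ R) {M N : ℕ} (hNM : N ≤ M)
    (hM : Integrable (fun x : ℝ => x ^ (2 * M)) ν) (hN : Integrable (fun x : ℝ => x ^ (2 * N)) ν) :
    R ^ (2 * (M - N)) * ∫ x in Ici R, x ^ (2 * N) ∂ν ≤ ∫ x, x ^ (2 * M) ∂ν := by
  have hpt : ∀ x ∈ Ici R, R ^ (2 * (M - N)) * x ^ (2 * N) ≤ x ^ (2 * M) := fun x hx => by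
    rw [show 2 * M = 2 * (M - N) + 2 * N by omega, pow_add]
    exact mul_le_mul_of_nonneg_right (pow_le_pow_left₀ hR hx _) ((even_two_mul N).pow_nonneg x)
  calc R ^ (2 * (M - N)) * ∫ x in Ici R, x ^ (2 * N) ∂ν
      = ∫ x in Ici R, R ^ (2 * (M - N)) * x ^ (2 * N) ∂ν := (integral_const_mul _ _).symm
    _ ≤ ∫ x in Ici R, x ^ (2 * M) ∂ν :=
        setIntegral_mono_on (hN.const_mul _).integrableOn hM.integrableOn measurableSet_Ici hpt
    _ ≤ ∫ x, x ^ (2 * M) ∂ν :=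
        setIntegral_le_integral hM (ae_of_all _ fun x => (even_two_mul M).pow_nonneg x)

lemma pow_mul_measureReal_Ici_le [IsFiniteMeasure ν] {R : ℝ} (hR : 0 ≤ R) (M : ℕ)
    (hM : Integrable (fun x : ℝ => x ^ (2 * M)) ν) :
    R ^ (2 * M) * ν.real (Ici R) ≤ ∫ x, x ^ (2 * M) ∂ν := by
  simpa using pow_mul_setIntegral_Ici_pow_le hR (Nat.zero_le M) hM (by simp)

lemma setIntegral_Ici_eq_add {f : ℝ → ℝ} (hf : Integrable f ν) {a b : ℝ} (hab : a ≤ b) :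
    ∫ x in Ici a, f x ∂ν = ∫ x in Ico a b, f x ∂ν + ∫ x in Ici b, f x ∂ν := by
  rw [← Ico_union_Ici_eq_Ici hab, setIntegral_union ((Iio_disjoint_Ici le_rfl).mono_left
    Ico_subset_Iio_self) measurableSet_Ici hf.integrableOn hf.integrableOn]

lemma integral_pow_le_head_add_middle_add_tail [IsFiniteMeasure ν] (hν : ν (Iio 0) = 0) {a b : ℝ}
    (ha : 0 ≤ a) (hab : a ≤ b) {N : ℕ} (hN : Integrable (fun x : ℝ => x ^ (2 * N)) ν) :
    ∫ x, x ^ (2 * N) ∂ν ≤ ∫ x in Ico 0 a, x ^ (2 * N) ∂ν + b ^ (2 * N) * ν.real (Ici a)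
      + ∫ x in Ici b, x ^ (2 * N) ∂ν := by
  have hmid : ∫ x in Ico a b, x ^ (2 * N) ∂ν ≤ b ^ (2 * N) * ν.real (Ici a) :=
    calc ∫ x in Ico a b, x ^ (2 * N) ∂ν ≤ ∫ _ in Ico a b, b ^ (2 * N) ∂ν :=
          setIntegral_mono_on hN.integrableOn (integrableOn_const (by finiteness))
            measurableSet_Ico fun x hx => pow_le_pow_left₀ (ha.trans hx.1) hx.2.le _
      _ = b ^ (2 * N) * ν.real (Ico a b) := by rw [setIntegral_const, smul_eq_mul, mul_comm]
      _ ≤ b ^ (2 * N) * ν.real (Ici a) :=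
          mul_le_mul_of_nonneg_left (measureReal_mono Ico_subset_Ici_self)
            ((even_two_mul N).pow_nonneg b)
  have hpos : ∫ x, x ^ (2 * N) ∂ν = ∫ x in Ici 0, x ^ (2 * N) ∂ν := by
    refine (setIntegral_eq_integral_of_ae_compl_eq_zero ?_).symm
    filter_upwards [measure_eq_zero_iff_ae_notMem.mp hν] with x hx hx'
    exact absurd (not_le.mp hx') (by simpa using hx)
  rw [hpos, setIntegral_Ici_eq_add hN ha, setIntegral_Ici_eq_add hN hab]
  linarith

lemma integral_pow_le_two_mul_measureReal_Ici [IsFiniteMeasure ν] (hν : ν (Iio 0) = 0)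
    {a b : ℝ} (ha : 0 < a) (hab : a ≤ b) {M₁ N M₂ : ℕ} (h₁ : M₁ ≤ N) (h₂ : N ≤ M₂)
    (hM₁ : Integrable (fun x : ℝ => x ^ (2 * M₁)) ν) (hN : Integrable (fun x : ℝ => x ^ (2 * N)) ν)
    (hM₂ : Integrable (fun x : ℝ => x ^ (2 * M₂)) ν)
    (hhead : 4 * (a ^ (2 * (N - M₁)) * ∫ x, x ^ (2 * M₁) ∂ν) ≤ ∫ x, x ^ (2 * N) ∂ν)
    (htail : 4 * ∫ x, x ^ (2 * M₂) ∂ν ≤ b ^ (2 * (M₂ - N)) * ∫ x, x ^ (2 * N) ∂ν) :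
    ∫ x, x ^ (2 * N) ∂ν ≤ 2 * (b ^ (2 * N) * ν.real (Ici a)) := by
  have head := setIntegral_Ico_zero_pow_le (R := a) h₁ hM₁ hN
  have tail : 4 * ∫ x in Ici b, x ^ (2 * N) ∂ν ≤ ∫ x, x ^ (2 * N) ∂ν := by
    refine le_of_mul_le_mul_left ?_ (pow_pos (ha.trans_le hab) (2 * (M₂ - N)))
    linarith [pow_mul_setIntegral_Ici_pow_le (ha.le.trans hab) h₂ hM₂ hN]
  linarith [integral_pow_le_head_add_middle_add_tail hν ha.le hab hN]

end MomentInequalities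

/-- The logarithm of the Markov bound `m_K / R^{2K}` for `ν[R, ∞)`, where `m_K = exp (L K)` and
`R = Y^{p/2}`. -/
noncomputable def markovExponent (L : ℕ → ℝ) (p Y : ℝ) (K : ℕ) : ℝ := L K - p * K * log Y

lemma rpow_half_pow_two_mul {Y : ℝ} (hY : 0 < Y) (p : ℝ) (K : ℕ) :
    (Y ^ (p / 2)) ^ (2 * K) = exp (p * K * log Y) := by
  rw [rpow_def_of_pos hY, ← exp_nat_mul]
  push_cast
  ring_nf

section MarkovExponent

variable {ν : Measure ℝ} [IsFiniteMeasure ν] {L : ℕ → ℝ} {p : ℝ}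

lemma measureReal_Ici_le_exp_markovExponent {Y : ℝ} (hY : 0 < Y) {K : ℕ}
    (hK : ∫ x, x ^ (2 * K) ∂ν = exp (L K)) :
    ν.real (Ici (Y ^ (p / 2))) ≤ exp (markovExponent L p Y K) := by
  have markov := pow_mul_measureReal_Ici_le (rpow_nonneg hY.le (p / 2)) K
    (.of_integral_ne_zero (hK ▸ (exp_pos _).ne'))
  rw [hK, rpow_half_pow_two_mul hY] at markov
  rw [markovExponent, exp_sub, le_div_iff₀ (exp_pos _)]
  linarith

lemma exp_markovExponent_sub_log_two_le (hν : ν (Iio 0) = 0) (hp : 0 ≤ p) {Y Y' : ℝ}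
    (hY : 0 < Y) (hYY' : Y ≤ Y') {M₁ N M₂ : ℕ} (h₁ : M₁ ≤ N) (h₂ : N ≤ M₂)
    (hM₁ : ∫ x, x ^ (2 * M₁) ∂ν = exp (L M₁)) (hN : ∫ x, x ^ (2 * N) ∂ν = exp (L N))
    (hM₂ : ∫ x, x ^ (2 * M₂) ∂ν = exp (L M₂))
    (hhead : markovExponent L p Y M₁ - markovExponent L p Y N ≤ -log 4)
    (htail : markovExponent L p Y' M₂ - markovExponent L p Y' N ≤ -log 4) :
    exp (markovExponent L p Y' N - log 2) ≤ ν.real (Ici (Y ^ (p / 2))) := by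
  have hY' : 0 < Y' := hY.trans_le hYY'
  have key := integral_pow_le_two_mul_measureReal_Ici hν (rpow_pos_of_pos hY _)
    (rpow_le_rpow hY.le hYY' (div_nonneg hp zero_le_two)) h₁ h₂
    (.of_integral_ne_zero (hM₁ ▸ (exp_pos _).ne')) (.of_integral_ne_zero (hN ▸ (exp_pos _).ne'))
    (.of_integral_ne_zero (hM₂ ▸ (exp_pos _).ne')) ?head ?tail
  · rw [hN, rpow_half_pow_two_mul hY'] at key
    rw [markovExponent, exp_sub, exp_sub, exp_log two_pos, div_div, div_le_iff₀ (by positivity)]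
    linarith
  case head =>
    rw [hM₁, hN, rpow_half_pow_two_mul hY, ← exp_log (four_pos : (0 : ℝ) < 4), ← exp_add,
      ← exp_add, exp_le_exp]
    unfold markovExponent at hhead
    push_cast [Nat.cast_sub h₁]
    linarith
  case tail =>
    rw [hM₂, hN, rpow_half_pow_two_mul hY', ← exp_log (four_pos : (0 : ℝ) < 4), ← exp_add,
      ← exp_add, exp_le_exp]
    unfold markovExponent at htail
    push_cast [Nat.cast_sub h₂]
    linarith

end MarkovExponent

section RealAsymptotics

variable {f : ℝ → ℝ} {ℓ b : ℝ}

lemma tendsto_atBot_of_tendsto_div (hf : Tendsto (fun Y => f Y / Y) atTop (𝓝 ℓ)) (hℓ : ℓ < 0) :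
    Tendsto f atTop atBot :=
  (hf.neg_mul_atTop hℓ tendsto_id).congr'
    ((eventually_ne_atTop 0).mono fun _ hY => div_mul_cancel₀ _ hY)

lemma eventually_le_mul_of_tendsto_div (hf : Tendsto (fun Y => f Y / Y) atTop (𝓝 ℓ))
    (hb : ℓ < b) : ∀ᶠ Y in atTop, f Y ≤ b * Y := by
  filter_upwards [hf.eventually (gt_mem_nhds hb), eventually_gt_atTop 0] with Y h hY
  exact ((div_lt_iff₀ hY).1 h).le

lemma eventually_mul_le_of_tendsto_div (hf : Tendsto (fun Y => f Y / Y) atTop (𝓝 ℓ))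
    (hb : b < ℓ) : ∀ᶠ Y in atTop, b * Y ≤ f Y := by
  filter_upwards [hf.eventually (lt_mem_nhds hb), eventually_gt_atTop 0] with Y h hY
  exact ((lt_div_iff₀ hY).1 h).le

lemma tendsto_log_div_of_exp_bounds {F : ℝ → ℝ} {a : ℝ}
    (hup : ∀ b > a, ∀ᶠ Y in atTop, F Y ≤ exp (b * Y))
    (hlow : ∀ b < a, ∀ᶠ Y in atTop, exp (b * Y) ≤ F Y) :
    Tendsto (fun Y => log (F Y) / Y) atTop (𝓝 a) := by
  refine tendsto_order.2 ⟨fun b' hb' => ?_, fun b' hb' => ?_⟩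
  · obtain ⟨b, hb'b, hba⟩ := exists_between hb'
    filter_upwards [hlow b hba, eventually_gt_atTop 0] with Y hF hY
    rw [lt_div_iff₀ hY]
    calc b' * Y < b * Y := by gcongr
      _ = log (exp (b * Y)) := (log_exp _).symm
      _ ≤ log (F Y) := log_le_log (exp_pos _) hF
  · obtain ⟨b, hab, hbb'⟩ := exists_between hb'
    filter_upwards [hup b hab, hlow (a - 1) (by linarith), eventually_gt_atTop 0]
      with Y hF hFpos hY
    rw [div_lt_iff₀ hY]
    calc log (F Y) ≤ log (exp (b * Y)) := log_le_log ((exp_pos _).trans_le hFpos) hF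
      _ = b * Y := log_exp _
      _ < b' * Y := by gcongr

lemma tendsto_nat_floor_const_mul_atTop {θ : ℝ} (hθ : 0 < θ) :
    Tendsto (fun Y : ℝ => ⌊θ * Y⌋₊) atTop atTop :=
  tendsto_nat_floor_atTop.comp (tendsto_id.const_mul_atTop hθ)

end RealAsymptotics

noncomputable def markovRate (p c θ : ℝ) : ℝ := θ * (p * log θ + c)

section MarkovRate

variable {L : ℕ → ℝ} {p c : ℝ}

theorem tendsto_markovExponent_floor_div
    (hL : Tendsto (fun N : ℕ => (L N - (p * N * log N + c * N)) / N) atTop (𝓝 0))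
    {θ : ℝ} (hθ : 0 < θ) :
    Tendsto (fun Y => markovExponent L p Y ⌊θ * Y⌋₊ / Y) atTop (𝓝 (markovRate p c θ)) := by
  have hNY : Tendsto (fun Y : ℝ => (⌊θ * Y⌋₊ : ℝ) / Y) atTop (𝓝 θ) :=
    tendsto_nat_floor_mul_div_atTop hθ.le
  have hlim := (hNY.mul (hL.comp (tendsto_nat_floor_const_mul_atTop hθ))).add
    (hNY.mul (((hNY.log hθ.ne').const_mul p).add_const c))
  rw [mul_zero, zero_add] at hlim
  refine hlim.congr' ?_
  filter_upwards [eventually_gt_atTop 0,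
    (tendsto_nat_floor_const_mul_atTop hθ).eventually (eventually_ge_atTop 1)] with Y hY hN
  have hN0 : (0 : ℝ) < ⌊θ * Y⌋₊ := by exact_mod_cast hN
  simp only [Function.comp_apply, markovExponent]
  rw [log_div hN0.ne' hY.ne']
  field_simp
  ring

lemma markovRate_exp (hp : p ≠ 0) :
    markovRate p c (exp (-1 - c / p)) = -(p * exp (-1 - c / p)) := by
  rw [markovRate, log_exp]
  field_simp
  ring

lemma markovRate_exp_lt (hp : 0 < p) {θ : ℝ} (hθ : 0 < θ) (hne : θ ≠ exp (-1 - c / p)) :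
    markovRate p c (exp (-1 - c / p)) < markovRate p c θ := by
  set γ := exp (-1 - c / p) with hγ
  have hγ0 : 0 < γ := exp_pos _
  have hc : c = -p * (1 + log γ) := by rw [hγ, log_exp]; field_simp; ring
  have key : θ * (log γ - log θ) < γ - θ := by
    have h := log_lt_sub_one_of_pos (div_pos hγ0 hθ) (div_ne_one_of_ne hne.symm)
    rw [log_div hγ0.ne' hθ.ne'] at h
    calc θ * (log γ - log θ) < θ * (γ / θ - 1) := mul_lt_mul_of_pos_left h hθ
      _ = γ - θ := by field_simp
  rw [markovRate, markovRate, hc]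
  nlinarith [mul_lt_mul_of_pos_left key hp]

lemma tendsto_markovExponent_sub_atBot (hp : 0 < p)
    (hL : Tendsto (fun N : ℕ => (L N - (p * N * log N + c * N)) / N) atTop (𝓝 0))
    {θ : ℝ} (hθ : 0 < θ) (hne : θ ≠ exp (-1 - c / p)) :
    Tendsto (fun Y => markovExponent L p Y ⌊exp (-1 - c / p) * Y⌋₊
      - markovExponent L p Y ⌊θ * Y⌋₊) atTop atBot :=
  tendsto_atBot_of_tendsto_div (by simpa only [sub_div] using
    (tendsto_markovExponent_floor_div hL (exp_pos _)).sub (tendsto_markovExponent_floor_div hL hθ))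
    (sub_neg.2 (markovRate_exp_lt hp hθ hne))

lemma exists_one_lt_lt_sq_mul_markovRate {γ b : ℝ} (hγ : 0 < γ) (hb : b < markovRate p c γ) :
    ∃ r, 1 < r ∧ b < r ^ 2 * markovRate p c (γ / r) := by
  have hcont : ContinuousAt (fun r => r ^ 2 * markovRate p c (γ / r)) 1 := by
    unfold markovRate
    fun_prop (disch := simp [hγ.ne'])
  have hev : ∀ᶠ r in 𝓝[>] 1, b < r ^ 2 * markovRate p c (γ / r) :=
    nhdsWithin_le_nhds (hcont.eventually (lt_mem_nhds (by simpa using hb)))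
  exact (hev.and self_mem_nhdsWithin).exists.imp fun r h => ⟨h.2, h.1⟩

end MarkovRate

section TailAsymptotics

variable {ν : Measure ℝ} [IsFiniteMeasure ν] {L : ℕ → ℝ} {p c : ℝ}

lemma eventually_measureReal_Ici_le_exp
    (hL : Tendsto (fun N : ℕ => (L N - (p * N * log N + c * N)) / N) atTop (𝓝 0))
    (hM : ∀ᶠ N : ℕ in atTop, ∫ x, x ^ (2 * N) ∂ν = exp (L N))
    {θ b : ℝ} (hθ : 0 < θ) (hb : markovRate p c θ < b) :
    ∀ᶠ Y in atTop, ν.real (Ici (Y ^ (p / 2))) ≤ exp (b * Y) := by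
  filter_upwards [eventually_le_mul_of_tendsto_div (tendsto_markovExponent_floor_div hL hθ) hb,
    (tendsto_nat_floor_const_mul_atTop hθ).eventually hM, eventually_gt_atTop 0] with Y hb hK hY
  exact (measureReal_Ici_le_exp_markovExponent hY hK).trans (exp_le_exp.2 hb)

lemma eventually_exp_le_measureReal_Ici (hν : ν (Iio 0) = 0) (hp : 0 < p)
    (hL : Tendsto (fun N : ℕ => (L N - (p * N * log N + c * N)) / N) atTop (𝓝 0))
    (hM : ∀ᶠ N : ℕ in atTop, ∫ x, x ^ (2 * N) ∂ν = exp (L N))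
    {r b : ℝ} (hr : 1 < r) (hb : b < r ^ 2 * markovRate p c (exp (-1 - c / p) / r)) :
    ∀ᶠ Y in atTop, exp (b * Y) ≤ ν.real (Ici (Y ^ (p / 2))) := by
  set γ := exp (-1 - c / p)
  have hγ0 : 0 < γ := exp_pos _
  have hr0 : 0 < r := by linarith
  have hγr : 0 < γ / r := div_pos hγ0 hr0
  have hscale : Tendsto (fun Y : ℝ => r ^ 2 * Y) atTop atTop :=
    tendsto_id.const_mul_atTop (by positivity)
  -- The index `⌊rγY⌋` is off-optimal both on the scale `Y` (head) and on the scale `r²Y` (tail).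
  have hfloor : ∀ Y, ⌊γ / r * (r ^ 2 * Y)⌋₊ = ⌊r * γ * Y⌋₊ := fun Y => by
    congr 1; field_simp
  have hhead : Tendsto (fun Y => markovExponent L p Y ⌊γ * Y⌋₊
      - markovExponent L p Y ⌊r * γ * Y⌋₊) atTop atBot :=
    tendsto_markovExponent_sub_atBot hp hL (by positivity) (ne_of_gt (lt_mul_left hγ0 hr))
  have htail : Tendsto (fun Y => markovExponent L p (r ^ 2 * Y) ⌊γ * (r ^ 2 * Y)⌋₊
      - markovExponent L p (r ^ 2 * Y) ⌊r * γ * Y⌋₊) atTop atBot := by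
    simpa only [Function.comp_def, hfloor] using
      (tendsto_markovExponent_sub_atBot hp hL hγr (ne_of_lt (div_lt_self hγ0 hr))).comp hscale
  have hmain : ∀ᶠ Y in atTop, b * Y ≤ markovExponent L p (r ^ 2 * Y) ⌊r * γ * Y⌋₊ - log 2 := by
    refine eventually_mul_le_of_tendsto_div ?_ hb
    have := (((tendsto_markovExponent_floor_div hL hγr).comp hscale).const_mul (r ^ 2)).sub
      (tendsto_const_nhds (x := log 2).div_atTop tendsto_id)
    rw [sub_zero] at this
    refine this.congr' ((eventually_ne_atTop 0).mono fun Y hY => ?_)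
    simp only [Function.comp_apply, hfloor, id]
    field_simp
  filter_upwards [hhead.eventually (eventually_le_atBot (-log 4)),
    htail.eventually (eventually_le_atBot (-log 4)), hmain, eventually_gt_atTop 0,
    (tendsto_nat_floor_const_mul_atTop hγ0).eventually hM,
    (tendsto_nat_floor_const_mul_atTop (by positivity : 0 < r * γ)).eventually hM,
    ((tendsto_nat_floor_const_mul_atTop hγ0).comp hscale).eventually hM]
    with Y hhead htail hmain hY hM₁ hN hM₂
  refine (exp_le_exp.2 hmain).trans (exp_markovExponent_sub_log_two_le hν hp.le hY ?_ ?_ ?_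
    hM₁ hN hM₂ hhead htail)
  · exact le_mul_of_one_le_left hY.le (one_le_pow₀ hr.le)
  · exact Nat.floor_le_floor (by nlinarith [mul_pos hγ0 hY])
  · exact Nat.floor_le_floor (show r * γ * Y ≤ γ * (r ^ 2 * Y) by
      nlinarith [mul_pos (mul_pos hr0 hγ0) hY])

theorem tendsto_log_measureReal_Ici_rpow_div (hν : ν (Iio 0) = 0) (hp : 0 < p)
    (hL : Tendsto (fun N : ℕ => (L N - (p * N * log N + c * N)) / N) atTop (𝓝 0))
    (hM : ∀ᶠ N : ℕ in atTop, ∫ x, x ^ (2 * N) ∂ν = exp (L N)) :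
    Tendsto (fun Y => log (ν.real (Ici (Y ^ (p / 2)))) / Y) atTop
      (𝓝 (-(p * exp (-1 - c / p)))) := by
  rw [← markovRate_exp hp.ne']
  refine tendsto_log_div_of_exp_bounds
    (fun b hb => eventually_measureReal_Ici_le_exp hL hM (exp_pos _) hb) fun b hb => ?_
  obtain ⟨r, hr, hbr⟩ := exists_one_lt_lt_sq_mul_markovRate (exp_pos _) hb
  exact eventually_exp_le_measureReal_Ici hν hp hL hM hr hbr

end TailAsymptotics

/-- Full tail asymptotics from moment asymptotics: if
`∫ x^{2N} dν = N^{β²N/2} e^{c** N + o(N)}`, then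
`t^{-4/β²} log ν[t,∞) → -c*` with `c* = (β²/2) e^{-1-2c**/β²}`. -/
theorem tail_asymptotics_from_moments (β : ℝ) (hβ : β ∈ Set.Ioo 0 (Real.sqrt 2))
    (ν : Measure ℝ) [IsProbabilityMeasure ν] (hsupp : ν (Set.Iio 0) = 0)
    (css : ℝ) (o : ℕ → ℝ)
    (ho : Tendsto (fun N : ℕ => o N / N) atTop (nhds 0))
    (hmom : ∀ N : ℕ, 1 ≤ N →
      ∫ x, x ^ (2 * N) ∂ν = (N : ℝ) ^ (β ^ 2 * (N : ℝ) / 2) * Real.exp (css * N + o N)) :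
    Tendsto (fun t : ℝ => Real.log (ν (Set.Ici t)).toReal / t ^ ((4 : ℝ) / β ^ 2)) atTop
      (nhds (-(β ^ 2 / 2 * Real.exp (-1 - 2 * css / β ^ 2)))) := by
  have hβ0 : β ≠ 0 := hβ.1.ne'
  have hp : 0 < β ^ 2 / 2 := by positivity
  have hL : Tendsto (fun N : ℕ => (β ^ 2 / 2 * N * log N + css * N + o N
      - (β ^ 2 / 2 * N * log N + css * N)) / N) atTop (𝓝 0) := by
    simpa only [add_sub_cancel_left] using ho
  have hM : ∀ᶠ N : ℕ in atTop,
      ∫ x, x ^ (2 * N) ∂ν = exp (β ^ 2 / 2 * N * log N + css * N + o N) := by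
    filter_upwards [eventually_ge_atTop 1] with N hN
    rw [hmom N hN, rpow_def_of_pos (by exact_mod_cast hN), ← exp_add]
    ring_nf
  have hY := tendsto_log_measureReal_Ici_rpow_div hsupp hp hL hM
  rw [show (4 : ℝ) / β ^ 2 = 2 / (β ^ 2 / 2) by field_simp; ring,
    show 2 * css / β ^ 2 = css / (β ^ 2 / 2) by field_simp]
  refine (hY.comp (tendsto_rpow_atTop (div_pos two_pos hp))).congr' ?_
  filter_upwards [eventually_ge_atTop 0] with t ht
  rw [Function.comp_apply, ← rpow_mul ht, show 2 / (β ^ 2 / 2) * (β ^ 2 / 2 / 2) = 1 by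
    field_simp, rpow_one, measureReal_def]
end
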